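/- arXiv:math/0309406 — 7 statements merged into one kernel-verified Lean document; each statement's English description precedes it below -/
import Mathlib

section
/- For N ≥ 3 and each k ≥ 0, the pair (s,t) = (a_k, a_{k+1}) satisfies s² - N·s·t + t² = 1, where a_k is the generalized Fibonacci sequence defined by a_0 = 0, a_1 = 1, a_{k+1} = N·a_k - a_{k-1}. -/
/-- For `N ≥ 3`, the pairs `(s,t) = (a k, a (k+1))` of the generalized Fibonacci
sequence `a 0 = 0`, `a 1 = 1`, `a (k+2) = N·a (k+1) - a k` satisfy
`s² - N·s·t + t² = 1`. -/
theorem stmt1 (N : ℤ) (hN : 3 ≤ N) (a : ℕ → ℤ)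
    (h0 : a 0 = 0) (h1 : a 1 = 1)
    (hrec : ∀ k : ℕ, a (k + 2) = N * a (k + 1) - a k) :
    ∀ k : ℕ, (a k)^2 - N * (a k) * (a (k + 1)) + (a (k + 1))^2 = 1 := by
  intro k
  induction k with
  | zero => simp [h0, h1]
  | succ n ih => rw [hrec n]; ring_nf; ring_nf at ih; linarith
end

section
/- For N ≥ 3, every pair of nonnegative integers (s,t) with t > s satisfying s² - N·s·t + t² = 1 is of the form (s,t) = (a_k, a_{k+1}) for some k ≥ 0, where a_k is the sequence defined by a_0 = 0, a_1 = 1, a_{k+1} = N·a_k - a_{k-1}. -/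
/-- For `N ≥ 3`, every pair of nonnegative integers `(s,t)` with `t > s` and
`s² - N·s·t + t² = 1` is of the form `(a k, a (k+1))` where `a 0 = 0`, `a 1 = 1`,
`a (k+2) = N·a (k+1) - a k`. -/
theorem stmt2 (N : ℤ) (hN : 3 ≤ N) (a : ℕ → ℤ)
    (h0 : a 0 = 0) (h1 : a 1 = 1)
    (hrec : ∀ k : ℕ, a (k + 2) = N * a (k + 1) - a k) :
    ∀ s t : ℤ, 0 ≤ s → s < t → s^2 - N * s * t + t^2 = 1 →
      ∃ k : ℕ, s = a k ∧ t = a (k + 1) := by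
  have main : ∀ n : ℕ, ∀ s t : ℤ, t ≤ (n : ℤ) → 0 ≤ s → s < t →
      s^2 - N * s * t + t^2 = 1 → ∃ k : ℕ, s = a k ∧ t = a (k + 1) := by
    intro n
    induction n with
    | zero => intro s t ht hs hst _; exfalso; omega
    | succ n ih =>
      intro s t ht hs hst heq
      by_cases h : s = 0
      · subst h
        have ht1 : t = 1 := by nlinarith [sq_nonneg (t - 1)]
        exact ⟨0, by simp [h0, h1, ht1]⟩
      · have hs1 : 1 ≤ s := by omega
        have ht0 : 0 < t := by omega
        have h1' : 0 ≤ N * s - t := by nlinarith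
        have h2' : N * s - t < s := by nlinarith
        have heq' : (N * s - t)^2 - N * (N * s - t) * s + s^2 = 1 := by nlinarith
        have hsn : s ≤ (n : ℤ) := by push_cast at ht ⊢; omega
        obtain ⟨k, hk1, hk2⟩ := ih (N * s - t) s hsn h1' h2' heq'
        refine ⟨k + 1, hk2, ?_⟩
        rw [hrec k, ← hk2, ← hk1]; ring
  intro s t hs hst heq
  exact main t.toNat s t (by omega) hs hst heq
end

section
/- Let N ≥ 3 and consider the Pell-type equation r² - (N²-4)·s² = 4 in nonnegative integers. Under the change of variables r = 2t - Ns, its solutions correspond bijectively to nonnegative integer solutions of s² - N·s·t + t² = 1 with t ≥ s ≥ 0. -/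
/-- For `N ≥ 3`, the change of variables `(s,t) ↦ (r,s) = (2t - Ns, s)` is a
bijection from the nonnegative integer solutions of `s² - Nst + t² = 1` with
`t ≥ s ≥ 0` onto the nonnegative integer solutions of the Pell-type equation
`r² - (N²-4)s² = 4`. -/
theorem stmt5 (N : ℤ) (hN : 3 ≤ N) :
    Set.BijOn (fun p : ℤ × ℤ => (2 * p.2 - N * p.1, p.1))
      {p : ℤ × ℤ | 0 ≤ p.1 ∧ p.1 ≤ p.2 ∧ p.1^2 - N * p.1 * p.2 + p.2^2 = 1}
      {q : ℤ × ℤ | 0 ≤ q.1 ∧ 0 ≤ q.2 ∧ q.1^2 - (N^2 - 4) * q.2^2 = 4} := by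
  refine ⟨?_, ?_, ?_⟩
  · rintro ⟨s, t⟩ ⟨hs0, hst, heq⟩
    have ht0 : 0 ≤ t := hs0.trans hst
    refine ⟨?_, hs0, by linear_combination 4 * heq⟩
    by_contra h
    push_neg at h
    dsimp only at h hs0 hst heq
    have h1 : 0 ≤ t * (N * s - 2 * t) := mul_nonneg ht0 (by linarith)
    have h2 : 0 ≤ (t - s) * (t + s) := mul_nonneg (by linarith) (by linarith)
    nlinarith [heq, h1, h2]
  · rintro ⟨s, t⟩ hp ⟨s', t'⟩ hp' h
    simp only [Prod.mk.injEq] at h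
    obtain ⟨ha, hb⟩ := h
    rw [hb] at ha
    have : t = t' := by linarith
    simp [hb, this]
  · rintro ⟨r, s⟩ ⟨hr0, hs0, heq⟩
    have hpar : Even (r + N * s) := by
      have h1 : Even (r ^ 2 - (N * s) ^ 2) :=
        ⟨2 - 2 * s ^ 2, by linear_combination heq⟩
      have h2 : (Even (r ^ 2)) ↔ Even ((N * s) ^ 2) := Int.even_sub.mp h1
      rw [Int.even_pow' two_ne_zero, Int.even_pow' two_ne_zero] at h2
      exact Int.even_add.mpr h2
    obtain ⟨t, ht⟩ := hpar
    have hr : r = 2 * t - N * s := by linarith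
    refine ⟨⟨s, t⟩, ⟨hs0, ?_, ?_⟩, ?_⟩
    · nlinarith [hr0, hs0]
    · have h4 : 4 * (s ^ 2 - N * s * t + t ^ 2) = 4 := by
        rw [hr] at heq; linear_combination heq
      linarith
    · rw [hr]
end

section
/- Let N ≥ 3, and let n₁, n₂, m₁, m₂ be positive integers. Then the system of inequalities n₁n₂ + m₁m₂ - N·n₁m₂ ≥ 0, n₁n₂ + m₁m₂ - N·n₂m₁ ≥ 0, together with (n₁+n₂)² - N(n₁+n₂)(m₁+m₂) + (m₁+m₂)² ≤ 0, has no solution. -/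
/-- For `N ≥ 3` and positive integers `n₁, n₂, m₁, m₂`, the system
`n₁n₂ + m₁m₂ - N·n₁m₂ ≥ 0`, `n₁n₂ + m₁m₂ - N·n₂m₁ ≥ 0`, together with
`(n₁+n₂)² - N(n₁+n₂)(m₁+m₂) + (m₁+m₂)² ≤ 0`, has no solution. -/
theorem stmt6 (N n1 n2 m1 m2 : ℤ) (hN : 3 ≤ N)
    (hn1 : 1 ≤ n1) (hn2 : 1 ≤ n2) (hm1 : 1 ≤ m1) (hm2 : 1 ≤ m2) :
    ¬ (n1 * n2 + m1 * m2 - N * n1 * m2 ≥ 0 ∧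
       n1 * n2 + m1 * m2 - N * n2 * m1 ≥ 0 ∧
       (n1 + n2)^2 - N * (n1 + n2) * (m1 + m2) + (m1 + m2)^2 ≤ 0) := by
  rintro ⟨h1, h2, h3⟩
  have hab : 0 < n1 * n2 + m1 * m2 := by nlinarith
  -- key identity
  have hX : 0 ≤ n1^2 + n2^2 + m1^2 + m2^2 - N * (n1 * m1 + n2 * m2) := by
    have key : (n1 * n2 + m1 * m2) * (n1^2 + n2^2 + m1^2 + m2^2 - N * (n1 * m1 + n2 * m2))
        = (n2^2 + m1^2) * (n1 * n2 + m1 * m2 - N * n1 * m2)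
          + (n1^2 + m2^2) * (n1 * n2 + m1 * m2 - N * n2 * m1) := by ring
    nlinarith [mul_nonneg (by positivity : (0:ℤ) ≤ n2^2 + m1^2) h1,
      mul_nonneg (by positivity : (0:ℤ) ≤ n1^2 + m2^2) h2]
  have hf3 : 0 ≤ (n1 + n2)^2 - N * (n1 + n2) * (m1 + m2) + (m1 + m2)^2 := by nlinarith
  have heq : (n1 + n2)^2 - N * (n1 + n2) * (m1 + m2) + (m1 + m2)^2 = 0 := le_antisymm h3 hf3
  set p := n1 + n2 with hp
  set q := m1 + m2 with hq
  have hqpos : 0 < q := by omega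
  have hsq : (2 * p - N * q)^2 = (N^2 - 4) * q^2 := by linear_combination 4 * heq
  have hdvd : q ∣ (2 * p - N * q) := by
    have h2d : q^2 ∣ (2 * p - N * q)^2 := ⟨N^2 - 4, by linarith [hsq]⟩
    exact (Int.pow_dvd_pow_iff two_ne_zero).mp h2d
  obtain ⟨e, he⟩ := hdvd
  have he2 : e^2 = N^2 - 4 := by
    have hq2 : (q:ℤ)^2 ≠ 0 := pow_ne_zero 2 (by omega)
    have : q^2 * e^2 = q^2 * (N^2 - 4) := by rw [he] at hsq; linear_combination hsq
    exact mul_left_cancel₀ hq2 this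
  have h5 : e < N := by nlinarith
  have h6 : -N < e := by nlinarith
  have h7 : (e - (N - 1)) * (e + (N - 1)) ≤ 0 := by
    rcases le_or_gt e 0 with h | h
    · exact mul_nonpos_of_nonpos_of_nonneg (by omega) (by omega)
    · exact mul_nonpos_of_nonpos_of_nonneg (by omega) (by omega)
  nlinarith [h7]
end

section
/- Let N ≥ 3 and n₁, m₁ be positive integers with n₁ > α₊·m₁ where α₊ = (N+√(N²-4))/2. Then there are no positive integers n₂, m₂ satisfying both n₁·n₂ ≥ (N·n₁ - m₁)·m₂ and n₂ ≤ α₊·m₂ + (α₊·m₁ - n₁). -/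
/-- For `N ≥ 3`, `n₁, m₁ > 0` with `n₁ > α₊·m₁` where `α₊ = (N+√(N²-4))/2`,
there are no positive integers `n₂, m₂` with `n₁·n₂ ≥ (N·n₁ - m₁)·m₂` and
`n₂ ≤ α₊·m₂ + (α₊·m₁ - n₁)`. -/
theorem stmt7 (N n1 m1 : ℤ) (hN : 3 ≤ N) (hn1 : 0 < n1) (hm1 : 0 < m1)
    (h : (n1 : ℝ) > ((N : ℝ) + Real.sqrt ((N : ℝ)^2 - 4)) / 2 * m1) :
    ¬ ∃ n2 m2 : ℤ, 0 < n2 ∧ 0 < m2 ∧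
      n1 * n2 ≥ (N * n1 - m1) * m2 ∧
      (n2 : ℝ) ≤ ((N : ℝ) + Real.sqrt ((N : ℝ)^2 - 4)) / 2 * m2 +
        (((N : ℝ) + Real.sqrt ((N : ℝ)^2 - 4)) / 2 * m1 - n1) := by
  rintro ⟨n2, m2, hn2, hm2, hge, hle⟩
  set s : ℝ := Real.sqrt ((N : ℝ)^2 - 4) with hs_def
  have hNR : (3 : ℝ) ≤ (N : ℝ) := by exact_mod_cast hN
  have hs0 : 0 ≤ s := Real.sqrt_nonneg _
  have hs2 : s ^ 2 = (N : ℝ)^2 - 4 := Real.sq_sqrt (by nlinarith)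
  set α : ℝ := ((N : ℝ) + s) / 2 with hα_def
  have hαpos : 0 < α := by positivity
  have hkey : α * ((N : ℝ) - α) = 1 := by
    rw [hα_def]; ring_nf; nlinarith
  -- cast hypotheses to ℝ
  have hgeR : ((N : ℝ) * n1 - m1) * m2 ≤ (n1 : ℝ) * n2 := by exact_mod_cast hge
  have hn1R : (0 : ℝ) < n1 := by exact_mod_cast hn1
  have hm1R : (0 : ℝ) < m1 := by exact_mod_cast hm1
  have hn2R : (0 : ℝ) < n2 := by exact_mod_cast hn2
  have hm2R : (0 : ℝ) < m2 := by exact_mod_cast hm2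
  -- N - α = 1/α > 0
  have hNα : 0 < (N : ℝ) - α := by
    nlinarith
  -- m1 < n1 * (N - α)
  have h1 : (m1 : ℝ) < n1 * ((N : ℝ) - α) := by
    have := mul_lt_mul_of_pos_right h hNα
    calc (m1 : ℝ) = m1 * (α * ((N : ℝ) - α)) := by rw [hkey]; ring
      _ = α * m1 * ((N : ℝ) - α) := by ring
      _ < n1 * ((N : ℝ) - α) := this
  -- (N n1 - m1) m2 > α n1 m2
  have h2 : α * n1 * m2 < ((N : ℝ) * n1 - m1) * m2 := by nlinarith
  -- n1 n2 < α n1 m2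
  have h3 : (n1 : ℝ) * n2 < α * n1 * m2 := by nlinarith
  linarith
end

section
/- If s² + t² - N·s·t ≥ 2 (with s,t positive integers, N ≥ 3), then for every s×t matrix M of linear forms in N variables there exists a nontrivial solution (X,Y) ∈ GL(s,ℂ) × GL(t,ℂ), i.e., (X,Y) not of the form (λI,λI), with X·M = M·Y. -/
/-- If `s² + t² - N·s·t ≥ 2` (with `s, t` positive, `N ≥ 3`), then every
`s×t` matrix `M` of linear forms in `N` variables admits a nontrivial solution
`(X,Y) ∈ GL(s,ℂ) × GL(t,ℂ)` of `X·M = M·Y`, i.e. one not of the form `(λI,λI)`. -/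
theorem stmt11 (N s t : ℕ) (hN : 3 ≤ N) (hs : 0 < s) (ht : 0 < t)
    (h : 2 ≤ (s : ℤ)^2 + (t : ℤ)^2 - N * s * t) :
    ∀ M : Fin N → Matrix (Fin s) (Fin t) ℂ,
      ∃ (X : Matrix.GeneralLinearGroup (Fin s) ℂ)
        (Y : Matrix.GeneralLinearGroup (Fin t) ℂ),
        (∀ v : Fin N,
          (X : Matrix (Fin s) (Fin s) ℂ) * M v = M v * (Y : Matrix (Fin t) (Fin t) ℂ)) ∧
        ¬ ∃ c : ℂˣ,
          (X : Matrix (Fin s) (Fin s) ℂ) = (c : ℂ) • (1 : Matrix (Fin s) (Fin s) ℂ) ∧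
          (Y : Matrix (Fin t) (Fin t) ℂ) = (c : ℂ) • (1 : Matrix (Fin t) (Fin t) ℂ) := by
  intro M
  -- the linear map whose kernel is the solution space
  set L : (Matrix (Fin s) (Fin s) ℂ × Matrix (Fin t) (Fin t) ℂ) →ₗ[ℂ]
      (Fin N → Matrix (Fin s) (Fin t) ℂ) :=
    { toFun := fun p => fun v => p.1 * M v - M v * p.2
      map_add' := by
        intro p q
        funext v
        dsimp
        rw [Matrix.add_mul, Matrix.mul_add]
        abel
      map_smul' := by
        intro c p
        funext v
        simp [Matrix.smul_mul, Matrix.mul_smul, smul_sub] } with hL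
  -- dimension count
  have hrank : 2 ≤ Module.finrank ℂ (LinearMap.ker L) := by
    have h1 := LinearMap.finrank_range_add_finrank_ker L
    have h2 : Module.finrank ℂ (LinearMap.range L) ≤
        Module.finrank ℂ (Fin N → Matrix (Fin s) (Fin t) ℂ) :=
      Submodule.finrank_le _
    have hdom : Module.finrank ℂ (Matrix (Fin s) (Fin s) ℂ × Matrix (Fin t) (Fin t) ℂ)
        = s * s + t * t := by
      simp [Module.finrank_prod, Module.finrank_matrix]
    have hcod : Module.finrank ℂ (Fin N → Matrix (Fin s) (Fin t) ℂ) = N * (s * t) := by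
      simp [Module.finrank_pi_fintype, Module.finrank_matrix]
    rw [hdom] at h1
    rw [hcod] at h2
    have h1' : (Module.finrank ℂ (LinearMap.range L) : ℤ)
        + Module.finrank ℂ (LinearMap.ker L) = s * s + t * t := by exact_mod_cast h1
    have h2' : (Module.finrank ℂ (LinearMap.range L) : ℤ) ≤ N * (s * t) := by
      exact_mod_cast h2
    have hk : (2 : ℤ) ≤ (Module.finrank ℂ (LinearMap.ker L) : ℤ) := by nlinarith
    exact_mod_cast hk
  -- find a solution not in the span of (1,1)
  obtain ⟨⟨A, B⟩, hABker, hABspan⟩ :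
      ∃ p ∈ LinearMap.ker L, p ∉ Submodule.span ℂ
        {((1 : Matrix (Fin s) (Fin s) ℂ), (1 : Matrix (Fin t) (Fin t) ℂ))} := by
    by_contra hcon
    push_neg at hcon
    have hle : LinearMap.ker L ≤ Submodule.span ℂ
        {((1 : Matrix (Fin s) (Fin s) ℂ), (1 : Matrix (Fin t) (Fin t) ℂ))} := hcon
    have := Submodule.finrank_mono hle
    have hne : (((1 : Matrix (Fin s) (Fin s) ℂ), (1 : Matrix (Fin t) (Fin t) ℂ))
        : Matrix (Fin s) (Fin s) ℂ × Matrix (Fin t) (Fin t) ℂ) ≠ 0 := by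
      intro h0
      have h1 : (1 : Matrix (Fin s) (Fin s) ℂ) = 0 := congrArg Prod.fst h0
      have h2 := congrFun (congrFun h1 ⟨0, hs⟩) ⟨0, hs⟩
      simp [Matrix.one_apply] at h2
    have hspan : Module.finrank ℂ (Submodule.span ℂ
        {((1 : Matrix (Fin s) (Fin s) ℂ), (1 : Matrix (Fin t) (Fin t) ℂ))}) ≤ 1 :=
      le_of_eq (finrank_span_singleton hne)
    omega
  -- choose μ avoiding both spectra
  have hfin : (spectrum ℂ A ∪ spectrum ℂ B).Finite :=
    (Matrix.finite_spectrum A).union (Matrix.finite_spectrum B)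
  obtain ⟨μ, hμ⟩ := hfin.infinite_compl.nonempty
  simp only [Set.mem_compl_iff, Set.mem_union, not_or] at hμ
  obtain ⟨hμA, hμB⟩ := hμ
  have hXu : IsUnit (μ • (1 : Matrix (Fin s) (Fin s) ℂ) - A) := by
    have := spectrum.notMem_iff.mp hμA
    rwa [Algebra.algebraMap_eq_smul_one] at this
  have hYu : IsUnit (μ • (1 : Matrix (Fin t) (Fin t) ℂ) - B) := by
    have := spectrum.notMem_iff.mp hμB
    rwa [Algebra.algebraMap_eq_smul_one] at this
  refine ⟨hXu.unit, hYu.unit, ?_, ?_⟩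
  · intro v
    have hker : (fun v => A * M v - M v * B) = 0 := hABker
    have hv : A * M v - M v * B = 0 := congrFun hker v
    have : hXu.unit.val = μ • (1 : Matrix (Fin s) (Fin s) ℂ) - A := rfl
    rw [this]
    have hY : hYu.unit.val = μ • (1 : Matrix (Fin t) (Fin t) ℂ) - B := rfl
    rw [hY]
    rw [Matrix.sub_mul, Matrix.mul_sub, Matrix.smul_mul, Matrix.mul_smul, Matrix.one_mul, Matrix.mul_one]
    have : A * M v = M v * B := by linear_combination (norm := noncomm_ring) hv
    rw [this]
  · rintro ⟨c, hc1, hc2⟩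
    apply hABspan
    rw [Submodule.mem_span_singleton]
    refine ⟨μ - c, ?_⟩
    have h1 : hXu.unit.val = μ • (1 : Matrix (Fin s) (Fin s) ℂ) - A := rfl
    have h2 : hYu.unit.val = μ • (1 : Matrix (Fin t) (Fin t) ℂ) - B := rfl
    rw [h1] at hc1
    rw [h2] at hc2
    have hA : A = (μ - (c : ℂ)) • (1 : Matrix (Fin s) (Fin s) ℂ) := by
      rw [sub_smul, ← hc1]; abel
    have hB : B = (μ - (c : ℂ)) • (1 : Matrix (Fin t) (Fin t) ℂ) := by
      rw [sub_smul, ← hc2]; abel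
    exact Prod.ext hA.symm hB.symm
end

section
/- Suppose s² - N·s·t + t² ≤ 0 with N ≥ 3. If (A,B) ∈ GL(s,ℂ)×GL(t,ℂ) are Jordan canonical forms not of the form (λI, λI), then the set of matrices M of linear forms in N variables satisfying C^{-1}MD = M for some (C,D) conjugate to (A,B) is contained in a proper Zariski closed subset of ℂ^s ⊗ ℂ^t ⊗ ℂ^N. -/
namespace St18


/-- Upper-triangular vanishing from the recurrence. -/
theorem upper_zero (s : ℕ) (c : ℕ → ℕ → ℂ)
    (hR : ∀ i j, i < s → j + 1 < s →
      c i (j+1) = ((i:ℂ) - (j:ℂ)) * c i j + (if i = 0 then 0 else c (i-1) j)) :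
    ∀ j, j < s → ∀ i, i < j → c i j = 0 := by
  intro j
  induction j using Nat.strong_induction_on with
  | _ j ih =>
    intro hjs i hij
    obtain ⟨j', rfl⟩ : ∃ j', j = j' + 1 := ⟨j - 1, by omega⟩
    rw [hR i j' (by omega) (by omega)]
    rcases Nat.lt_or_ge i j' with h | h
    · rw [ih j' (by omega) (by omega) i h]
      rcases Nat.eq_zero_or_pos i with h0 | h0
      · rw [if_pos h0]; ring
      · rw [if_neg (by omega), ih j' (by omega) (by omega) (i-1) (by omega)]; ring
    · have : i = j' := by omega
      subst this
      rcases Nat.eq_zero_or_pos i with h0 | h0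
      · subst h0; rw [if_pos rfl]; ring
      · rw [if_neg (by omega), ih i (by omega) (by omega) (i-1) (by omega)]; ring

/-- Strictly-lower vanishing in rows `≥ ρ`, from zero-block plus recurrence. -/
theorem lower_zero_hi (s ρ : ℕ) (c : ℕ → ℕ → ℂ) (hρ : 1 ≤ ρ)
    (hR : ∀ i j, i < s → j + 1 < s →
      c i (j+1) = ((i:ℂ) - (j:ℂ)) * c i j + (if i = 0 then 0 else c (i-1) j))
    (hZB : ∀ i j, i < s → ρ ≤ i → j < ρ → c i j = 0) :
    ∀ j, j < s → ∀ i, i < s → ρ ≤ i → j < i → c i j = 0 := by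
  intro j
  induction j using Nat.strong_induction_on with
  | _ j ih =>
    intro hjs i his hρi hji
    rcases Nat.lt_or_ge j ρ with h | h
    · exact hZB i j his hρi h
    · obtain ⟨j', rfl⟩ : ∃ j', j = j' + 1 := ⟨j - 1, by omega⟩
      rw [hR i j' (by omega) (by omega)]
      rw [ih j' (by omega) (by omega) i his hρi (by omega)]
      rw [if_neg (by omega), ih j' (by omega) (by omega) (i-1) (by omega) (by omega) (by omega)]
      ring

/-- All strictly-lower entries vanish. -/
theorem lower_zero_all (s ρ : ℕ) (c : ℕ → ℕ → ℂ) (hρ : 1 ≤ ρ) (hρs : ρ < s)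
    (hR : ∀ i j, i < s → j + 1 < s →
      c i (j+1) = ((i:ℂ) - (j:ℂ)) * c i j + (if i = 0 then 0 else c (i-1) j))
    (hZB : ∀ i j, i < s → ρ ≤ i → j < ρ → c i j = 0) :
    ∀ i j, i < s → j < i → c i j = 0 := by
  have main : ∀ k i j, i < s → j < i → ρ ≤ i + k → c i j = 0 := by
    intro k
    induction k with
    | zero => intro i j his hji hρi; exact lower_zero_hi s ρ c hρ hR hZB j (by omega) i his (by omega) hji
    | succ k ih =>
      intro i j his hji hρi
      rcases le_or_gt ρ (i + k) with h | h
      · exact ih i j his hji h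
      · -- ρ = i + k + 1, so i < ρ
        have hi1 : i + 1 < s := by omega
        have hj1 : j + 1 < s := by omega
        have heq := hR (i+1) j hi1 hj1
        rw [if_neg (by omega)] at heq
        have h1 : c (i+1) (j+1) = 0 := ih (i+1) (j+1) hi1 (by omega) (by omega)
        have h2 : c (i+1) j = 0 := ih (i+1) j hi1 (by omega) (by omega)
        have : (i+1 : ℕ) - 1 = i := by omega
        rw [h1, h2, this] at heq
        simpa using heq.symm
  intro i j his hji
  exact main ρ i j his hji (by omega)

/-- Final scalar lemma, zero-block variant. -/
theorem scalar_core (s ρ : ℕ) (c : ℕ → ℕ → ℂ) (hρ : 1 ≤ ρ) (hρs : ρ < s)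
    (hR : ∀ i j, i < s → j + 1 < s →
      c i (j+1) = ((i:ℂ) - (j:ℂ)) * c i j + (if i = 0 then 0 else c (i-1) j))
    (hZB : ∀ i j, i < s → ρ ≤ i → j < ρ → c i j = 0) :
    ∀ i j, i < s → j < s → c i j = if i = j then c 0 0 else 0 := by
  have hlow := lower_zero_all s ρ c hρ hρs hR hZB
  have hup := upper_zero s c hR
  have hdiag : ∀ i, i < s → c i i = c 0 0 := by
    intro i
    induction i with
    | zero => intro _; rfl
    | succ i ih =>
      intro his
      have heq := hR (i+1) i (by omega) (by omega)
      rw [if_neg (by omega)] at heq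
      have h1 : c (i+1) i = 0 := hlow (i+1) i (by omega) (by omega)
      have : (i+1 : ℕ) - 1 = i := by omega
      rw [h1, this] at heq
      rw [heq, ih (by omega)]
      push_cast
      ring
  intro i j his hjs
  rcases Nat.lt_trichotomy i j with h | h | h
  · rw [if_neg (by omega)]; exact hup j hjs i h
  · subst h; rw [if_pos rfl]; exact hdiag i his
  · rw [if_neg (by omega)]; exact hlow i j his h

/-- Final scalar lemma, off-diagonal variant. -/
theorem scalar_core' (s : ℕ) (c : ℕ → ℕ → ℂ)
    (hR : ∀ i j, i < s → j + 1 < s →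
      c i (j+1) = ((i:ℂ) - (j:ℂ)) * c i j + (if i = 0 then 0 else c (i-1) j))
    (hOD : ∀ i j, i < s → j < s → i ≠ j → c i j = 0) :
    ∀ i j, i < s → j < s → c i j = if i = j then c 0 0 else 0 := by
  have hdiag : ∀ i, i < s → c i i = c 0 0 := by
    intro i
    induction i with
    | zero => intro _; rfl
    | succ i ih =>
      intro his
      have heq := hR (i+1) i (by omega) (by omega)
      rw [if_neg (by omega)] at heq
      have h1 : c (i+1) i = 0 := hOD (i+1) i (by omega) (by omega) (by omega)
      have : (i+1 : ℕ) - 1 = i := by omega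
      rw [h1, this] at heq
      rw [heq, ih (by omega)]
      push_cast
      ring
  intro i j his hjs
  rcases eq_or_ne i j with h | h
  · subst h; rw [if_pos rfl]; exact hdiag i his
  · rw [if_neg h]; exact hOD i j his hjs h



variable {s t : ℕ}

/-- A partial identity "window" slice: rows `0..w-1` are unit vectors at columns `o..o+w-1`. -/
def win (s t o w : ℕ) : Matrix (Fin s) (Fin t) ℂ :=
  fun i j => if (j:ℕ) = o + (i:ℕ) ∧ (i:ℕ) < w then 1 else 0

/-- The `Λ+J` slice in columns `0..s-1` (diag `0,1,…` plus lower shift). -/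
def lj (s t : ℕ) : Matrix (Fin s) (Fin t) ℂ :=
  fun i j => if (j:ℕ) = (i:ℕ) then ((i:ℕ):ℂ) else if (j:ℕ) + 1 = (i:ℕ) then 1 else 0

/-- The `Λ` slice in columns `0..s-1`. -/
def lam (s t : ℕ) : Matrix (Fin s) (Fin t) ℂ :=
  fun i j => if (j:ℕ) = (i:ℕ) then ((i:ℕ):ℂ) else 0

section extraction

variable (C : Matrix (Fin s) (Fin s) ℂ) (D : Matrix (Fin t) (Fin t) ℂ)

lemma mul_win_apply (o w : ℕ) (hws : w ≤ s) (how : o + w ≤ t) (i : Fin s) (j : Fin t) :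
    (C * win s t o w) i j =
      if hj : o ≤ (j:ℕ) ∧ (j:ℕ) < o + w then C i ⟨(j:ℕ) - o, by omega⟩ else 0 := by
  rw [Matrix.mul_apply]
  split
  · next hj =>
    have hsum : ∑ k : Fin s, C i k * win s t o w k j
        = C i ⟨(j:ℕ) - o, by omega⟩ * win s t o w ⟨(j:ℕ) - o, by omega⟩ j := by
      apply Fintype.sum_eq_single
      intro k hk
      have : ¬ ((j:ℕ) = o + (k:ℕ) ∧ (k:ℕ) < w) := by
        rintro ⟨h1, h2⟩
        exact hk (Fin.ext (by simp only [Fin.val_mk]; omega))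
      rw [win, if_neg this, mul_zero]
    rw [hsum, win, if_pos ⟨by simp only [Fin.val_mk]; omega, by simp only [Fin.val_mk]; omega⟩,
      mul_one]
  · next hj =>
    apply Finset.sum_eq_zero
    intro k _
    have : ¬ ((j:ℕ) = o + (k:ℕ) ∧ (k:ℕ) < w) := by
      rintro ⟨h1, h2⟩; exact hj ⟨by omega, by omega⟩
    rw [win, if_neg this, mul_zero]

lemma win_mul_apply (o w : ℕ) (hws : w ≤ s) (how : o + w ≤ t) (i : Fin s) (j : Fin t) :
    (win s t o w * D) i j =
      if hi : (i:ℕ) < w then D ⟨o + (i:ℕ), by omega⟩ j else 0 := by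
  rw [Matrix.mul_apply]
  split
  · next hi =>
    have hsum : ∑ m : Fin t, win s t o w i m * D m j
        = win s t o w i ⟨o + (i:ℕ), by omega⟩ * D ⟨o + (i:ℕ), by omega⟩ j := by
      apply Fintype.sum_eq_single
      intro m hm
      have : ¬ ((m:ℕ) = o + (i:ℕ) ∧ (i:ℕ) < w) := by
        rintro ⟨h1, h2⟩
        exact hm (Fin.ext (by simp only [Fin.val_mk]; omega))
      rw [win, if_neg this, zero_mul]
    rw [hsum, win, if_pos ⟨by simp only [Fin.val_mk], hi⟩, one_mul]
  · next hi =>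
    apply Finset.sum_eq_zero
    intro m _
    have : ¬ ((m:ℕ) = o + (i:ℕ) ∧ (i:ℕ) < w) := by
      rintro ⟨h1, h2⟩; exact hi h2
    rw [win, if_neg this, zero_mul]

/-- From a window slice equation: rows `i < w` of `D` at offset `o` are given by `C`. -/
lemma win_D (o w : ℕ) (hws : w ≤ s) (how : o + w ≤ t)
    (h : C * win s t o w = win s t o w * D) (i : Fin s) (hiw : (i:ℕ) < w) (j : Fin t) :
    D ⟨o + (i:ℕ), by omega⟩ j =
      if hj : o ≤ (j:ℕ) ∧ (j:ℕ) < o + w then C i ⟨(j:ℕ) - o, by omega⟩ else 0 := by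
  have h3 := congrFun (congrFun h i) j
  rw [mul_win_apply C o w hws how, win_mul_apply D o w hws how, dif_pos hiw] at h3
  exact h3.symm

/-- From a window slice equation: zero block `C i k = 0` for `i ≥ w`, `k < w`. -/
lemma win_C0 (o w : ℕ) (hws : w ≤ s) (how : o + w ≤ t)
    (h : C * win s t o w = win s t o w * D) (i : Fin s) (hiw : w ≤ (i:ℕ))
    (k : Fin s) (hk : (k:ℕ) < w) :
    C i k = 0 := by
  have h3 := congrFun (congrFun h i) (⟨o + (k:ℕ), by omega⟩ : Fin t)
  rw [Matrix.mul_apply, Matrix.mul_apply] at h3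
  have hL : ∑ kk : Fin s, C i kk * win s t o w kk (⟨o + (k:ℕ), by omega⟩ : Fin t)
      = C i k := by
    have hcol : ∀ b : Fin s, b ≠ k →
        C i b * win s t o w b (⟨o + (k:ℕ), by omega⟩ : Fin t) = 0 := by
      intro b hb
      have hne : ¬ (((⟨o + (k:ℕ), by omega⟩ : Fin t) : ℕ) = o + (b:ℕ) ∧ (b:ℕ) < w) := by
        rintro ⟨h1, h2⟩
        simp only [Fin.val_mk] at h1
        exact hb (Fin.ext (by omega))
      rw [win, if_neg hne, mul_zero]
    rw [Fintype.sum_eq_single k hcol, win,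
      if_pos ⟨by simp only [Fin.val_mk], hk⟩, mul_one]
  have hR : ∑ m : Fin t, win s t o w i m * D m (⟨o + (k:ℕ), by omega⟩ : Fin t) = 0 := by
    apply Finset.sum_eq_zero
    intro m _
    have hne : ¬ ((m:ℕ) = o + (i:ℕ) ∧ (i:ℕ) < w) := by rintro ⟨_, h2⟩; omega
    rw [win, if_neg hne, zero_mul]
  rw [hL, hR] at h3
  exact h3


/-- Collapse a sum over `Fin n` of an `ite` on values. -/
lemma sum_ite_val {n : ℕ} (a : ℕ) (ha : a < n) (f : Fin n → ℂ) :
    ∑ k : Fin n, (if (k:ℕ) = a then f k else 0) = f ⟨a, ha⟩ := by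
  rw [Fintype.sum_eq_single (⟨a, ha⟩ : Fin n)]
  · rw [if_pos (by simp only [Fin.val_mk])]
  · intro b hb
    rw [if_neg (fun hv => hb (Fin.ext (by simp only [Fin.val_mk]; omega)))]

/-- The recurrence relations extracted from the `Λ+J` slice. -/
lemma lj_rel (hstle : s ≤ t) (h : C * lj s t = lj s t * D)
    (hDtop : ∀ (a : Fin s) (j : Fin t),
      D ⟨(a:ℕ), by omega⟩ j = if hj : (j:ℕ) < s then C a ⟨(j:ℕ), hj⟩ else 0)
    (i : Fin s) (jn : ℕ) (hj : jn + 1 < s) :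
    C i ⟨jn + 1, hj⟩ = (((i:ℕ):ℂ) - ((jn:ℕ):ℂ)) * C i ⟨jn, by omega⟩
      + (if (i:ℕ) = 0 then 0 else C ⟨(i:ℕ) - 1, by omega⟩ ⟨jn, by omega⟩) := by
  have hjt : jn < t := by omega
  set j : Fin t := ⟨jn, hjt⟩ with hjdef
  have hjval : (j:ℕ) = jn := rfl
  have h3 := congrFun (congrFun h i) j
  rw [Matrix.mul_apply, Matrix.mul_apply] at h3
  have hL : ∑ k : Fin s, C i k * lj s t k j
      = ((jn:ℕ):ℂ) * C i ⟨jn, by omega⟩ + C i ⟨jn + 1, hj⟩ := by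
    have hpt : ∀ k : Fin s, C i k * lj s t k j
        = (if (k:ℕ) = jn then ((jn:ℕ):ℂ) * C i k else 0)
          + (if (k:ℕ) = jn + 1 then C i k else 0) := by
      intro k
      rw [lj, hjval]
      by_cases h1 : jn = (k:ℕ)
      · rw [if_pos h1, if_pos (show (k:ℕ) = jn from h1.symm),
          if_neg (show ¬ (k:ℕ) = jn + 1 by omega), ← h1]
        ring
      · rw [if_neg h1]
        by_cases h2 : jn + 1 = (k:ℕ)
        · rw [if_pos h2, if_neg (show ¬ (k:ℕ) = jn by omega),
            if_pos (show (k:ℕ) = jn + 1 from h2.symm)]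
          ring
        · rw [if_neg h2, if_neg (show ¬ (k:ℕ) = jn by omega),
            if_neg (show ¬ (k:ℕ) = jn + 1 by omega)]
          ring
    rw [Finset.sum_congr rfl (fun k _ => hpt k), Finset.sum_add_distrib,
      sum_ite_val jn (by omega) (fun k => ((jn:ℕ):ℂ) * C i k),
      sum_ite_val (jn+1) (by omega) (fun k => C i k)]
  have hR : ∑ m : Fin t, lj s t i m * D m j
      = ((i:ℕ):ℂ) * C i ⟨jn, by omega⟩
        + (if (i:ℕ) = 0 then 0 else C ⟨(i:ℕ) - 1, by omega⟩ ⟨jn, by omega⟩) := by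
    have hpt : ∀ m : Fin t, lj s t i m * D m j
        = (if (m:ℕ) = (i:ℕ) then ((i:ℕ):ℂ) * D m j else 0)
          + (if (m:ℕ) + 1 = (i:ℕ) then D m j else 0) := by
      intro m
      rw [lj]
      by_cases h1 : (m:ℕ) = (i:ℕ)
      · rw [if_pos h1, if_pos h1, if_neg (show ¬ ((m:ℕ) + 1 = (i:ℕ)) by omega)]
        ring
      · rw [if_neg h1, if_neg h1]
        by_cases h2 : (m:ℕ) + 1 = (i:ℕ)
        · rw [if_pos h2, if_pos h2]
          ring
        · rw [if_neg h2, if_neg h2]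
          ring
    rw [Finset.sum_congr rfl (fun m _ => hpt m), Finset.sum_add_distrib]
    have hD1 : ∑ m : Fin t, (if (m:ℕ) = (i:ℕ) then ((i:ℕ):ℂ) * D m j else 0)
        = ((i:ℕ):ℂ) * C i ⟨jn, by omega⟩ := by
      rw [sum_ite_val (n := t) (i:ℕ) (by omega) (fun m => ((i:ℕ):ℂ) * D m j)]
      have := hDtop i j
      rw [this, dif_pos (show (j:ℕ) < s by omega)]
    rw [hD1]
    congr 1
    by_cases h0 : (i:ℕ) = 0
    · rw [if_pos h0]
      apply Finset.sum_eq_zero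
      intro m _
      rw [if_neg (by omega)]
    · rw [if_neg h0]
      have hcond : ∀ m : Fin t, ((m:ℕ) + 1 = (i:ℕ)) ↔ ((m:ℕ) = (i:ℕ) - 1) := by
        intro m; constructor <;> (intro; omega)
      calc ∑ m : Fin t, (if (m:ℕ) + 1 = (i:ℕ) then D m j else 0)
          = ∑ m : Fin t, (if (m:ℕ) = (i:ℕ) - 1 then D m j else 0) := by
            apply Finset.sum_congr rfl
            intro m _
            exact if_congr (hcond m) rfl rfl
        _ = D ⟨(i:ℕ) - 1, by omega⟩ j := sum_ite_val ((i:ℕ)-1) (by omega) (fun m => D m j)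
        _ = C ⟨(i:ℕ) - 1, by omega⟩ ⟨jn, by omega⟩ := by
            have := hDtop (⟨(i:ℕ) - 1, by omega⟩ : Fin s) j
            simp only [Fin.val_mk] at this
            rw [this, dif_pos (show (j:ℕ) < s by omega)]
  rw [hL, hR] at h3
  linear_combination h3

/-- Off-diagonal vanishing from the `Λ` slice. -/
lemma lam_OD (hstle : s ≤ t) (h : C * lam s t = lam s t * D)
    (hDtop : ∀ (a : Fin s) (j : Fin t),
      D ⟨(a:ℕ), by omega⟩ j = if hj : (j:ℕ) < s then C a ⟨(j:ℕ), hj⟩ else 0)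
    (i : Fin s) (jn : ℕ) (hjn : jn < s) (hne : (i:ℕ) ≠ jn) :
    C i ⟨jn, hjn⟩ = 0 := by
  have hjt : jn < t := by omega
  set j : Fin t := ⟨jn, hjt⟩ with hjdef
  have hjval : (j:ℕ) = jn := rfl
  have h3 := congrFun (congrFun h i) j
  rw [Matrix.mul_apply, Matrix.mul_apply] at h3
  have hL : ∑ k : Fin s, C i k * lam s t k j = ((jn:ℕ):ℂ) * C i ⟨jn, hjn⟩ := by
    have hpt : ∀ k : Fin s, C i k * lam s t k j
        = (if (k:ℕ) = jn then ((jn:ℕ):ℂ) * C i k else 0) := by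
      intro k
      rw [lam, hjval]
      by_cases h1 : jn = (k:ℕ)
      · rw [if_pos h1, if_pos (show (k:ℕ) = jn from h1.symm), ← h1]; ring
      · rw [if_neg h1, if_neg (show ¬ (k:ℕ) = jn by omega)]; ring
    rw [Finset.sum_congr rfl (fun k _ => hpt k),
      sum_ite_val jn hjn (fun k => ((jn:ℕ):ℂ) * C i k)]
  have hR : ∑ m : Fin t, lam s t i m * D m j = ((i:ℕ):ℂ) * C i ⟨jn, hjn⟩ := by
    have hpt : ∀ m : Fin t, lam s t i m * D m j
        = (if (m:ℕ) = (i:ℕ) then ((i:ℕ):ℂ) * D m j else 0) := by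
      intro m
      rw [lam]
      by_cases h1 : (m:ℕ) = (i:ℕ)
      · rw [if_pos h1, if_pos h1]
      · rw [if_neg h1, if_neg h1]; ring
    rw [Finset.sum_congr rfl (fun m _ => hpt m),
      sum_ite_val (n := t) (i:ℕ) (by omega) (fun m => ((i:ℕ):ℂ) * D m j)]
    have := hDtop i j
    rw [this, dif_pos (show (j:ℕ) < s by omega)]
  rw [hL, hR] at h3
  have hcast : ((jn:ℕ):ℂ) - ((i:ℕ):ℂ) ≠ 0 := by
    rw [sub_ne_zero]
    intro hcc
    exact hne (by exact_mod_cast hcc.symm)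
  have hfac : (((jn:ℕ):ℂ) - ((i:ℕ):ℂ)) * C i ⟨jn, hjn⟩ = 0 := by linear_combination h3
  rcases mul_eq_zero.mp hfac with hc | hc
  · exact absurd hc hcast
  · exact hc

end extraction



section designA

variable {N : ℕ}

/-- With a scalar `C`, window equations force the corresponding rows of `D` to be scalar. -/
lemma win_D_scalar {s t : ℕ} (C : Matrix (Fin s) (Fin s) ℂ) (D : Matrix (Fin t) (Fin t) ℂ)
    (o w : ℕ) (hws : w ≤ s) (how : o + w ≤ t)
    (h : C * win s t o w = win s t o w * D) (l : ℂ) (hC : C = l • 1)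
    (k : Fin t) (hk1 : o ≤ (k:ℕ)) (hk2 : (k:ℕ) < o + w) (j : Fin t) :
    D k j = if k = j then l else 0 := by
  have hiw : (k:ℕ) - o < w := by omega
  have hiws : (k:ℕ) - o < s := by omega
  have hval : ((⟨(k:ℕ) - o, hiws⟩ : Fin s) : ℕ) = (k:ℕ) - o := rfl
  have hD := win_D C D o w hws how h ⟨(k:ℕ) - o, hiws⟩ (by rw [hval]; exact hiw) j
  have ek : (⟨o + ((⟨(k:ℕ) - o, hiws⟩ : Fin s) : ℕ), by rw [hval]; omega⟩ : Fin t) = k := by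
    apply Fin.ext
    rw [Fin.val_mk, hval]
    omega
  rw [ek] at hD
  rw [hD]
  by_cases hj : o ≤ (j:ℕ) ∧ (j:ℕ) < o + w
  · rw [dif_pos hj, hC]
    simp only [Matrix.smul_apply, Matrix.one_apply, smul_eq_mul]
    by_cases hkj : k = j
    · have hvv : (k:ℕ) = (j:ℕ) := by rw [hkj]
      rw [if_pos (show (⟨(k:ℕ) - o, hiws⟩ : Fin s) = ⟨(j:ℕ) - o, by omega⟩ from
        Fin.ext (by show (k:ℕ) - o = (j:ℕ) - o; omega)), if_pos hkj, mul_one]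
    · have hvv : (k:ℕ) ≠ (j:ℕ) := fun hh => hkj (Fin.ext hh)
      rw [if_neg (show ¬ (⟨(k:ℕ) - o, hiws⟩ : Fin s) = ⟨(j:ℕ) - o, by omega⟩ from by
        intro hh
        apply_fun Fin.val at hh
        have hh2 : (k:ℕ) - o = (j:ℕ) - o := hh
        omega), if_neg hkj, mul_zero]
  · rw [dif_neg hj, if_neg (show ¬ k = j from by
      intro hh
      apply hj
      have hvv : (k:ℕ) = (j:ℕ) := by rw [hh]
      omega)]

/-- The explicit tensors with only scalar symmetry pairs, when `N ≥ t/s + 2`. -/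
theorem designA (N s t : ℕ) (hs : 0 < s) (hstle : s ≤ t) (hN : t / s + 2 ≤ N) :
    ∃ M : Fin N → Matrix (Fin s) (Fin t) ℂ,
      ∀ (C : Matrix (Fin s) (Fin s) ℂ) (D : Matrix (Fin t) (Fin t) ℂ),
        (∀ v, C * M v = M v * D) → ∃ l : ℂ, C = l • 1 ∧ D = l • 1 := by
  obtain ⟨q, ρ, hq, hρ⟩ : ∃ q ρ, q = t / s ∧ ρ = t % s := ⟨_, _, rfl, rfl⟩
  have hdm : q * s + ρ = t := by
    rw [hq, hρ, Nat.mul_comm]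
    exact Nat.div_add_mod t s
  have hρs : ρ < s := by rw [hρ]; exact Nat.mod_lt _ hs
  have hq1 : 1 ≤ q := by
    rw [hq]
    exact (Nat.one_le_div_iff hs).mpr hstle
  have hqN : q + 2 ≤ N := by rw [hq]; exact hN
  have hus : ∀ u, u < q → u * s + s ≤ t := by
    intro u hu
    have h1 : (u + 1) * s ≤ q * s := Nat.mul_le_mul_right s (by omega)
    have h2 : (u+1) * s = u * s + s := by ring
    omega
  obtain ⟨slice, hslice⟩ : ∃ f : ℕ → Matrix (Fin s) (Fin t) ℂ, f = fun n =>
      if n < q then win s t (n*s) s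
      else if n = q then (if ρ = 0 then lj s t else win s t (q*s) ρ)
      else if n = q+1 then (if ρ = 0 then lam s t else lj s t)
      else 0 := ⟨_, rfl⟩
  refine ⟨fun v => slice (v:ℕ), ?_⟩
  intro C D hCD
  -- window equations
  have hwin : ∀ u, u < q → C * win s t (u*s) s = win s t (u*s) s * D := by
    intro u hu
    have huN : u < N := by omega
    have hv : C * slice u = slice u * D := hCD ⟨u, huN⟩
    have hsv : slice u = win s t (u*s) s := by
      rw [hslice]
      simp only [hu, if_true]
    rwa [hsv] at hv
  -- the q-th and (q+1)-th slices
  have hqN' : q < N := by omega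
  have hq_slice : C * slice q = slice q * D := hCD ⟨q, hqN'⟩
  have hsq : slice q = (if ρ = 0 then lj s t else win s t (q*s) ρ) := by
    rw [hslice]
    simp only [show ¬ q < q from by omega, if_false, eq_self_iff_true, if_true]
  rw [hsq] at hq_slice
  have hq1N : q + 1 < N := by omega
  have hq1_slice : C * slice (q+1) = slice (q+1) * D := hCD ⟨q+1, hq1N⟩
  have hsq1 : slice (q+1) = (if ρ = 0 then lam s t else lj s t) := by
    rw [hslice]
    simp only [show ¬ q + 1 < q from by omega, show ¬ q + 1 = q from by omega,
      if_false, eq_self_iff_true, if_true]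
  rw [hsq1] at hq1_slice
  -- rows < s of D are given by C
  have hDtop : ∀ (a : Fin s) (j : Fin t),
      D ⟨(a:ℕ), by omega⟩ j = if hj : (j:ℕ) < s then C a ⟨(j:ℕ), hj⟩ else 0 := by
    intro a j
    have h0 := win_D C D (0*s) s (le_refl s) (by have := hus 0 hq1; omega)
      (hwin 0 hq1) a a.2 j
    have ea : (⟨0*s + (a:ℕ), by omega⟩ : Fin t) = ⟨(a:ℕ), by omega⟩ := by
      apply Fin.ext; simp only [Fin.val_mk]; omega
    rw [ea] at h0
    rw [h0]
    by_cases hj : (j:ℕ) < s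
    · rw [dif_pos (by omega), dif_pos hj]
      congr 1
      apply Fin.ext
      simp only [Fin.val_mk]
      omega
    · rw [dif_neg (by omega), dif_neg hj]
  -- the ℕ-level matrix entries
  obtain ⟨c, hc⟩ : ∃ c : ℕ → ℕ → ℂ, c = fun i j =>
      if h : i < s ∧ j < s then C ⟨i, h.1⟩ ⟨j, h.2⟩ else 0 := ⟨_, rfl⟩
  have hcv : ∀ (i j : ℕ) (hi : i < s) (hj : j < s), c i j = C ⟨i, hi⟩ ⟨j, hj⟩ := by
    intro i j hi hj
    rw [hc]
    exact dif_pos ⟨hi, hj⟩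
  -- scalar classification of C
  have hscal : ∀ i j, i < s → j < s → c i j = if i = j then c 0 0 else 0 := by
    by_cases hρ0 : ρ = 0
    · -- slice q is lj, slice q+1 is lam
      rw [if_pos hρ0] at hq_slice
      rw [if_pos hρ0] at hq1_slice
      apply scalar_core' s c
      · intro i j hi hj1
        have := lj_rel C D hstle hq_slice hDtop ⟨i, hi⟩ j hj1
        rw [hcv i (j+1) hi hj1, hcv i j hi (by omega)]
        simp only [Fin.val_mk] at this
        rw [this]
        congr 1
        by_cases h0 : i = 0
        · rw [if_pos h0, if_pos h0]
        · rw [if_neg h0, if_neg h0, hcv (i-1) j (by omega) (by omega)]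
      · intro i j hi hj hne
        have := lam_OD C D hstle hq1_slice hDtop ⟨i, hi⟩ j hj (by simpa using hne)
        rw [hcv i j hi hj]
        exact this
    · -- slice q is the mixed window, slice q+1 is lj
      have hρ1 : 1 ≤ ρ := by omega
      rw [if_neg hρ0] at hq_slice
      rw [if_neg hρ0] at hq1_slice
      apply scalar_core s ρ c hρ1 hρs
      · intro i j hi hj1
        have := lj_rel C D hstle hq1_slice hDtop ⟨i, hi⟩ j hj1
        rw [hcv i (j+1) hi hj1, hcv i j hi (by omega)]
        simp only [Fin.val_mk] at this
        rw [this]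
        congr 1
        by_cases h0 : i = 0
        · rw [if_pos h0, if_pos h0]
        · rw [if_neg h0, if_neg h0, hcv (i-1) j (by omega) (by omega)]
      · intro i j hi hρi hjρ
        have := win_C0 C D (q*s) ρ (by omega) (by omega) hq_slice ⟨i, hi⟩
          (by simpa using hρi) ⟨j, by omega⟩ (by simpa using hjρ)
        rw [hcv i j hi (by omega)]
        exact this
  -- C is scalar
  have hCmat : C = c 0 0 • 1 := by
    funext a b
    have := hscal (a:ℕ) (b:ℕ) a.2 b.2
    rw [hcv _ _ a.2 b.2] at this
    simp only [Fin.eta] at this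
    rw [this]
    simp only [Matrix.smul_apply, Matrix.one_apply, smul_eq_mul]
    by_cases hab : a = b
    · rw [if_pos (by rw [hab]), if_pos hab, mul_one]
    · rw [if_neg (by intro hh; exact hab (Fin.ext hh)), if_neg hab, mul_zero]
  refine ⟨c 0 0, hCmat, ?_⟩
  -- D is scalar
  funext k j
  simp only [Matrix.smul_apply, Matrix.one_apply, smul_eq_mul]
  by_cases hk : (k:ℕ) < q * s
  · obtain ⟨u, hu, hk1, hk2⟩ : ∃ u, u < q ∧ u * s ≤ (k:ℕ) ∧ (k:ℕ) < u * s + s := by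
      have h1 : (k:ℕ) % s < s := Nat.mod_lt _ hs
      have h2 : (k:ℕ) / s * s + (k:ℕ) % s = (k:ℕ) := Nat.div_add_mod' _ _
      exact ⟨(k:ℕ)/s, Nat.div_lt_of_lt_mul (hk.trans_eq (Nat.mul_comm q s)), by omega, by omega⟩
    have := win_D_scalar C D (u*s) s (le_refl s) (hus u hu) (hwin u hu)
      (c 0 0) hCmat k hk1 hk2 j
    rw [this]
    by_cases hkj : k = j
    · rw [if_pos hkj, if_pos hkj, mul_one]
    · rw [if_neg hkj, if_neg hkj, mul_zero]
  · have hρ1 : 1 ≤ ρ := by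
      rcases Nat.eq_zero_or_pos ρ with h0 | h0
      · exfalso; apply hk; have := k.2; omega
      · omega
    rw [if_neg (by omega)] at hq_slice
    have := win_D_scalar C D (q*s) ρ (by omega) (by omega) hq_slice
      (c 0 0) hCmat k (by omega) (by have := k.2; omega) j
    rw [this]
    by_cases hkj : k = j
    · rw [if_pos hkj, if_pos hkj, mul_one]
    · rw [if_neg hkj, if_neg hkj, mul_zero]

end designA


section reflect

/-- Reflection step: a brick of format `(s', t')` yields a brick of format `(t', t)`
where `t + s' = N * t'`. -/
theorem reflect (N s' t' t : ℕ) (hs' : 0 < s') (ht' : 0 < t') (htt : t + s' = N * t')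
    (hbrick : ∃ ψ : Fin N → Matrix (Fin s') (Fin t') ℂ,
      ∀ (c : Matrix (Fin s') (Fin s') ℂ) (d : Matrix (Fin t') (Fin t') ℂ),
        (∀ v, c * ψ v = ψ v * d) → ∃ l : ℂ, c = l • 1 ∧ d = l • 1) :
    ∃ M : Fin N → Matrix (Fin t') (Fin t) ℂ,
      ∀ (C : Matrix (Fin t') (Fin t') ℂ) (D : Matrix (Fin t) (Fin t) ℂ),
        (∀ v, C * M v = M v * D) → ∃ l : ℂ, C = l • 1 ∧ D = l • 1 := by
  obtain ⟨ψ, hψ⟩ := hbrick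
  obtain ⟨Ψ, hΨ⟩ : ∃ Ψ : Matrix (Fin s') (Fin N × Fin t') ℂ,
      Ψ = fun a p => ψ p.1 a p.2 := ⟨_, rfl⟩
  have hΨapply : ∀ a p, Ψ a p = ψ p.1 a p.2 := fun a p => by rw [hΨ]
  -- surjectivity of Ψ
  have hsurj : Function.Surjective Ψ.mulVecLin := by
    by_contra hns
    rw [← LinearMap.range_eq_top] at hns
    -- a nonzero functional vanishing on the range
    obtain ⟨y, hy⟩ : ∃ y, y ∉ LinearMap.range Ψ.mulVecLin := by
      by_contra hall
      push_neg at hall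
      exact hns (Submodule.eq_top_iff'.mpr hall)
    set W := LinearMap.range Ψ.mulVecLin with hW
    have hyq : W.mkQ y ≠ 0 := by
      intro h0
      exact hy ((Submodule.Quotient.mk_eq_zero W).mp (by rwa [Submodule.mkQ_apply] at h0))
    obtain ⟨φq, hφq⟩ : ∃ φq : Module.Dual ℂ ((Fin s' → ℂ) ⧸ W), φq (W.mkQ y) ≠ 0 := by
      by_contra hall
      push_neg at hall
      exact hyq ((Module.forall_dual_apply_eq_zero_iff ℂ _).mp hall)
    set φ : (Fin s' → ℂ) →ₗ[ℂ] ℂ := φq ∘ₗ W.mkQ with hφ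
    have hφW : ∀ x ∈ W, φ x = 0 := by
      intro x hx
      have : W.mkQ x = 0 := by
        rw [Submodule.mkQ_apply]
        exact (Submodule.Quotient.mk_eq_zero W).mpr hx
      simp [hφ, this]
    obtain ⟨f, hf⟩ : ∃ f : Fin s' → ℂ, f = fun a => φ (Pi.single a 1) := ⟨_, rfl⟩
    have hφeval : ∀ x : Fin s' → ℂ, φ x = ∑ a, x a * f a := by
      intro x
      conv_lhs => rw [pi_eq_sum_univ x]
      rw [map_sum]
      apply Finset.sum_congr rfl
      intro a _
      rw [map_smul, smul_eq_mul, hf]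
      congr 1
      congr 1
      funext j
      rw [Pi.single_apply]
      congr 1
      exact propext ⟨fun h => h.symm, fun h => h.symm⟩
    have hfψ : ∀ (v : Fin N) (k : Fin t'), ∑ a, ψ v a k * f a = 0 := by
      intro v k
      have hcol : (fun a => ψ v a k) ∈ W := by
        rw [hW]
        refine ⟨Pi.single (v, k) 1, ?_⟩
        funext a
        rw [Matrix.mulVecLin_apply]
        show ∑ p, Ψ a p * (Pi.single (v,k) (1:ℂ) : Fin N × Fin t' → ℂ) p = _
        rw [Fintype.sum_eq_single ((v,k) : Fin N × Fin t')]
        · rw [Pi.single_apply, if_pos rfl, mul_one, hΨapply]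
        · intro p hp
          rw [Pi.single_apply, if_neg (by intro hh; exact hp hh), mul_zero]
      have := hφW _ hcol
      rwa [hφeval] at this
    have hfne : f ≠ 0 := by
      intro h0
      apply hφq
      have : φ y = 0 := by
        rw [hφeval, h0]
        simp
      simpa [hφ] using this
    obtain ⟨b0, hb0⟩ : ∃ b0, f b0 ≠ 0 := by
      by_contra hall
      push_neg at hall
      exact hfne (funext hall)
    obtain ⟨π, hπ⟩ : ∃ π : Matrix (Fin s') (Fin s') ℂ,
        π = fun a b => (if a = (⟨0, hs'⟩ : Fin s') then 1 else 0) * f b := ⟨_, rfl⟩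
    have hπψ : ∀ v, π * ψ v = 0 := by
      intro v
      funext a k
      rw [Matrix.mul_apply, Matrix.zero_apply]
      calc ∑ b, π a b * ψ v b k
          = (if a = (⟨0, hs'⟩ : Fin s') then 1 else 0) * ∑ b, ψ v b k * f b := by
            rw [Finset.mul_sum]
            apply Finset.sum_congr rfl
            intro b _
            rw [hπ]
            ring
        _ = 0 := by
            have h1 : ∑ b, ψ v b k * f b = 0 := hfψ v k
            rw [h1, mul_zero]
    obtain ⟨l, hc, hd⟩ := hψ (1 + π) 1 (fun v => by
      rw [Matrix.add_mul, Matrix.one_mul, hπψ v, add_zero, Matrix.mul_one])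
    have hl1 : l = 1 := by
      have := congrFun (congrFun hd ⟨0, ht'⟩) ⟨0, ht'⟩
      simp only [Matrix.smul_apply, Matrix.one_apply_eq, smul_eq_mul, mul_one] at this
      exact this.symm
    rw [hl1, one_smul] at hc
    have hπ0 : π = 0 := by
      have : (1 : Matrix (Fin s') (Fin s') ℂ) + π = 1 + 0 := by rw [hc, add_zero]
      exact add_left_cancel this
    apply hb0
    have := congrFun (congrFun hπ0 ⟨0, hs'⟩) b0
    rw [hπ, Matrix.zero_apply] at this
    simpa using this
  -- the kernel K has dimension t
  have hfinK : Module.finrank ℂ (LinearMap.ker Ψ.mulVecLin) = t := by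
    have h1 := LinearMap.finrank_range_add_finrank_ker Ψ.mulVecLin
    rw [LinearMap.range_eq_top.mpr hsurj, finrank_top] at h1
    rw [Module.finrank_fintype_fun_eq_card, Module.finrank_fintype_fun_eq_card,
      Fintype.card_prod, Fintype.card_fin, Fintype.card_fin, Fintype.card_fin] at h1
    omega
  obtain ⟨bK, hbK⟩ : ∃ b : Module.Basis (Fin t) ℂ (LinearMap.ker Ψ.mulVecLin),
      b = (Module.finBasis ℂ _).reindex (finCongr hfinK) := ⟨_, rfl⟩
  obtain ⟨Tcol, hTcol⟩ : ∃ T : Fin t → (Fin N × Fin t' → ℂ),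
      T = fun y => ((bK y : Fin N × Fin t' → ℂ)) := ⟨_, rfl⟩
  have hTmem : ∀ y, Tcol y ∈ LinearMap.ker Ψ.mulVecLin := by
    intro y; rw [hTcol]; exact (bK y).2
  refine ⟨fun v => fun i y => Tcol y (v, i), ?_⟩
  intro C D hCD
  obtain ⟨CC, hCC⟩ : ∃ CC : Matrix (Fin N × Fin t') (Fin N × Fin t') ℂ,
      CC = fun p r => if p.1 = r.1 then C p.2 r.2 else 0 := ⟨_, rfl⟩
  have hCCapply : ∀ (x : Fin N × Fin t' → ℂ) (p : Fin N × Fin t'),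
      CC.mulVecLin x p = ∑ k, C p.2 k * x (p.1, k) := by
    intro x p
    rw [Matrix.mulVecLin_apply, Matrix.mulVec]
    show ∑ r, CC p r * x r = _
    rw [Fintype.sum_prod_type]
    rw [Fintype.sum_eq_single p.1]
    · apply Finset.sum_congr rfl
      intro k _
      rw [hCC]
      simp only [eq_self_iff_true, if_true]
    · intro w hw
      apply Finset.sum_eq_zero
      intro k _
      rw [hCC]
      simp only []
      rw [if_neg (by intro hh; exact hw hh.symm), zero_mul]
  have hTD : ∀ y, CC.mulVecLin (Tcol y) = ∑ m, D m y • Tcol m := by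
    intro y
    funext p
    obtain ⟨v, i⟩ := p
    rw [hCCapply]
    have h0 := congrFun (congrFun (hCD v) i) y
    change ∑ k, C i k * Tcol y (v, k) = ∑ m, Tcol m (v, i) * D m y at h0
    rw [Finset.sum_apply]
    calc ∑ k, C i k * Tcol y (v, k) = ∑ m, Tcol m (v, i) * D m y := h0
      _ = ∑ m, (D m y • Tcol m) (v, i) := by
          apply Finset.sum_congr rfl
          intro m _
          rw [Pi.smul_apply, smul_eq_mul]
          ring
  have hstable : ∀ x ∈ LinearMap.ker Ψ.mulVecLin, CC.mulVecLin x ∈ LinearMap.ker Ψ.mulVecLin := by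
    intro x hx
    have hxsum : x = ∑ y, (bK.repr ⟨x, hx⟩ y) • Tcol y := by
      calc x = ((⟨x, hx⟩ : LinearMap.ker Ψ.mulVecLin) : Fin N × Fin t' → ℂ) := rfl
        _ = (((∑ y, bK.repr ⟨x, hx⟩ y • bK y : LinearMap.ker Ψ.mulVecLin)) :
              Fin N × Fin t' → ℂ) := by rw [bK.sum_repr]
        _ = ∑ y, (bK.repr ⟨x, hx⟩ y) • Tcol y := by
            rw [AddSubmonoidClass.coe_finset_sum]
            apply Finset.sum_congr rfl
            intro y _
            rw [SetLike.val_smul, hTcol]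
    rw [hxsum, map_sum]
    apply Submodule.sum_mem
    intro y _
    rw [map_smul]
    apply Submodule.smul_mem
    rw [hTD]
    apply Submodule.sum_mem
    intro m _
    exact Submodule.smul_mem _ _ (hTmem m)
  have hkerle : LinearMap.ker Ψ.mulVecLin ≤ LinearMap.ker (Ψ.mulVecLin ∘ₗ CC.mulVecLin) := by
    intro x hx
    rw [LinearMap.mem_ker, LinearMap.comp_apply]
    exact hstable x hx
  obtain ⟨e, he⟩ : ∃ e : ((Fin N × Fin t' → ℂ) ⧸ LinearMap.ker Ψ.mulVecLin) ≃ₗ[ℂ] (Fin s' → ℂ),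
      e = LinearMap.quotKerEquivOfSurjective Ψ.mulVecLin hsurj := ⟨_, rfl⟩
  obtain ⟨dlin, hdlin⟩ : ∃ dl : (Fin s' → ℂ) →ₗ[ℂ] (Fin s' → ℂ),
      dl = ((LinearMap.ker Ψ.mulVecLin).liftQ (Ψ.mulVecLin ∘ₗ CC.mulVecLin) hkerle) ∘ₗ
        (e.symm : (Fin s' → ℂ) →ₗ[ℂ] _) := ⟨_, rfl⟩
  have hkey : ∀ x, dlin (Ψ.mulVecLin x) = Ψ.mulVecLin (CC.mulVecLin x) := by
    intro x
    have h1 : e.symm (Ψ.mulVecLin x) = Submodule.Quotient.mk x := by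
      apply e.injective
      rw [LinearEquiv.apply_symm_apply, he]
      rfl
    rw [hdlin, LinearMap.comp_apply, LinearEquiv.coe_coe, h1, Submodule.liftQ_apply,
      LinearMap.comp_apply]
  obtain ⟨dmat, hdmat⟩ : ∃ dm : Matrix (Fin s') (Fin s') ℂ,
      dm = fun a b => dlin (Pi.single b 1) a := ⟨_, rfl⟩
  have hdψ : ∀ v, dmat * ψ v = ψ v * C := by
    intro v
    funext a k
    have hx := hkey (Pi.single (v, k) 1)
    -- LHS of hx is dlin of the column of ψ v
    have hcol : Ψ.mulVecLin (Pi.single (v, k) 1) = fun b => ψ v b k := by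
      funext b
      rw [Matrix.mulVecLin_apply]
      show ∑ p, Ψ b p * (Pi.single (v,k) (1:ℂ) : Fin N × Fin t' → ℂ) p = _
      rw [Fintype.sum_eq_single ((v,k) : Fin N × Fin t')]
      · rw [Pi.single_apply, if_pos rfl, mul_one, hΨapply]
      · intro p hp
        rw [Pi.single_apply, if_neg (by intro hh; exact hp hh), mul_zero]
    have hCCs : CC.mulVecLin (Pi.single (v, k) 1) = fun p => if p.1 = v then C p.2 k else 0 := by
      funext p
      rw [hCCapply]
      rw [Fintype.sum_eq_single k]
      · rw [Pi.single_apply]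
        by_cases hp : p.1 = v
        · rw [if_pos hp, if_pos (by rw [hp]), mul_one]
        · rw [if_neg (by intro hh; apply hp; exact congrArg Prod.fst hh ▸ rfl), mul_zero,
            if_neg hp]
      · intro b hb
        rw [Pi.single_apply, if_neg (by intro hh; exact hb (congrArg Prod.snd hh)), mul_zero]
    have hRHS : Ψ.mulVecLin (CC.mulVecLin (Pi.single (v, k) 1)) = fun b => (ψ v * C) b k := by
      rw [hCCs]
      funext b
      rw [Matrix.mulVecLin_apply, Matrix.mulVec]
      show ∑ p, Ψ b p * _ = _
      rw [Fintype.sum_prod_type]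
      rw [Fintype.sum_eq_single v]
      · rw [Matrix.mul_apply]
        apply Finset.sum_congr rfl
        intro i _
        rw [hΨapply]
        simp only [eq_self_iff_true, if_true]
      · intro w hw
        apply Finset.sum_eq_zero
        intro i _
        simp only []
        rw [if_neg (by intro hh; exact hw hh), mul_zero]
    -- now compute the (a,k) entry
    have hLHS : (dmat * ψ v) a k = dlin (fun b => ψ v b k) a := by
      rw [Matrix.mul_apply]
      have hexp : (fun b => ψ v b k)
          = ∑ b, ψ v b k • (Pi.single b (1:ℂ) : Fin s' → ℂ) := by
        funext b'
        rw [Finset.sum_apply]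
        rw [Fintype.sum_eq_single b']
        · rw [Pi.smul_apply, Pi.single_apply, if_pos rfl, smul_eq_mul, mul_one]
        · intro b hb
          rw [Pi.smul_apply, Pi.single_apply, if_neg (fun hh => hb hh.symm), smul_eq_mul,
            mul_zero]
      rw [hexp, map_sum]
      rw [Finset.sum_apply]
      apply Finset.sum_congr rfl
      intro b _
      rw [map_smul, Pi.smul_apply, smul_eq_mul, hdmat]
      ring
    rw [← hcol] at hLHS
    rw [hLHS, hx, hRHS]
  obtain ⟨l, hdm, hCm⟩ := hψ dmat C hdψ
  refine ⟨l, hCm, ?_⟩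
  -- now derive D = l • 1
  have hTtriv : ∀ y, CC.mulVecLin (Tcol y) = l • Tcol y := by
    intro y
    funext p
    rw [hCCapply, Pi.smul_apply, smul_eq_mul]
    rw [Fintype.sum_eq_single p.2]
    · rw [hCm]
      simp only [Matrix.smul_apply, Matrix.one_apply_eq, smul_eq_mul, mul_one]
    · intro b hb
      rw [hCm]
      simp only [Matrix.smul_apply, Matrix.one_apply, smul_eq_mul]
      rw [if_neg (fun hh => hb hh.symm), mul_zero, zero_mul]
  have hbasis_eq : ∀ y, (∑ m, D m y • bK m) = l • bK y := by
    intro y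
    apply Subtype.ext
    calc ((∑ m, D m y • bK m : LinearMap.ker Ψ.mulVecLin) : Fin N × Fin t' → ℂ)
        = ∑ m, D m y • Tcol m := by
          rw [AddSubmonoidClass.coe_finset_sum]
          apply Finset.sum_congr rfl
          intro m _
          rw [SetLike.val_smul, hTcol]
      _ = l • Tcol y := by rw [← hTD y, hTtriv y]
      _ = ((l • bK y : LinearMap.ker Ψ.mulVecLin) : Fin N × Fin t' → ℂ) := by
          rw [SetLike.val_smul, hTcol]
  funext m y
  have h1 := congrArg bK.repr (hbasis_eq y)
  rw [map_sum, map_smul, Module.Basis.repr_self] at h1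
  have h2 := congrArg (fun g => g m) h1
  simp only [map_smul, Finsupp.coe_finset_sum, Finset.sum_apply, Finsupp.coe_smul,
    Pi.smul_apply, Module.Basis.repr_self] at h2
  rw [Finsupp.single_apply] at h2
  have h3 : ∑ m', D m' y * (if m' = m then (1:ℂ) else 0) = D m y := by
    rw [Fintype.sum_eq_single m]
    · rw [if_pos rfl, mul_one]
    · intro b hb
      rw [if_neg hb, mul_zero]
  have h4 : (∑ m', D m' y • ((Finsupp.single m' (1:ℂ)) m : ℂ)) = D m y := by
    calc (∑ m', D m' y • ((Finsupp.single m' (1:ℂ)) m : ℂ))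
        = ∑ m', D m' y * (if m' = m then (1:ℂ) else 0) := by
          apply Finset.sum_congr rfl
          intro m' _
          rw [smul_eq_mul, Finsupp.single_apply]
      _ = D m y := h3
  rw [h4] at h2
  rw [h2]
  by_cases hmy : m = y
  · subst hmy
    simp
  · have hym : ¬ y = m := fun hh => hmy hh.symm
    simp [hym, hmy]

end reflect


section brick

/-- Existence of bricks (tensors with only scalar symmetry pairs), case `s ≤ t`. -/
theorem brick_le (t : ℕ) : ∀ s N : ℕ, 3 ≤ N → 0 < s → s ≤ t → s*s + t*t ≤ N*(s*t) →
    ∃ M : Fin N → Matrix (Fin s) (Fin t) ℂ,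
      ∀ (C : Matrix (Fin s) (Fin s) ℂ) (D : Matrix (Fin t) (Fin t) ℂ),
        (∀ v, C * M v = M v * D) → ∃ l : ℂ, C = l • 1 ∧ D = l • 1 := by
  induction t using Nat.strong_induction_on with
  | _ t IH =>
    intro s N hN hs hst hineq
    have ht : 0 < t := lt_of_lt_of_le hs hst
    -- t < N * s
    have htNs : t < N * s := by
      have h1 : t * t < N * (s * t) := by nlinarith
      have h2 : t * t < (N * s) * t := by
        calc t * t < N * (s * t) := h1
          _ = (N * s) * t := by ring
      have := Nat.lt_of_mul_lt_mul_right h2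
      exact this
    have hqN : t / s < N := (Nat.div_lt_iff_lt_mul hs).mpr htNs
    by_cases hc : t / s + 2 ≤ N
    · exact designA N s t hs hst hc
    · -- N = t/s + 1 : reflection case
      obtain ⟨q, ρ, hq, hρ⟩ : ∃ q ρ, q = t / s ∧ ρ = t % s := ⟨_, _, rfl, rfl⟩
      have hdm : q * s + ρ = t := by
        rw [hq, hρ, Nat.mul_comm]
        exact Nat.div_add_mod t s
      have hρs : ρ < s := by rw [hρ]; exact Nat.mod_lt _ hs
      have hNq : N = q + 1 := by
        have hq' : t / s = q := hq.symm
        rw [hq'] at hc hqN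
        omega
      have hq2 : 2 ≤ q := by omega
      have hst' : s < t := by
        have h2s : 2 * s ≤ q * s := Nat.mul_le_mul_right s hq2
        omega
      -- reflected dimensions
      obtain ⟨s', hs'⟩ : ∃ s', s' = s - ρ := ⟨_, rfl⟩
      have hs'pos : 0 < s' := by omega
      have hs'le : s' ≤ s := by omega
      -- the reflected inequality
      have hineq' : s'*s' + s*s ≤ N*(s'*s) := by
        have hcast1 : (s':ℤ) = (s:ℤ) - (ρ:ℤ) := by
          rw [hs']
          push_cast [Nat.cast_sub (le_of_lt hρs)]
          ring
        have hcast2 : (t:ℤ) = (q:ℤ)*(s:ℤ) + (ρ:ℤ) := by exact_mod_cast hdm.symm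
        have hcast3 : (N:ℤ) = (q:ℤ) + 1 := by exact_mod_cast hNq
        have hZ : (s:ℤ)*s + (t:ℤ)*t ≤ (N:ℤ)*((s:ℤ)*(t:ℤ)) := by exact_mod_cast hineq
        have e : (N:ℤ)*((s':ℤ)*(s:ℤ)) - (s':ℤ)*(s':ℤ) - (s:ℤ)*(s:ℤ)
            = (N:ℤ)*((s:ℤ)*(t:ℤ)) - (s:ℤ)*(s:ℤ) - (t:ℤ)*(t:ℤ) := by
          rw [hcast1, hcast2, hcast3]
          ring
        have : (s':ℤ)*(s':ℤ) + (s:ℤ)*(s:ℤ) ≤ (N:ℤ)*((s':ℤ)*(s:ℤ)) := by linarith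
        exact_mod_cast this
      -- recursive brick at (s', s)
      have hbrick' := IH s hst' s' N hN hs'pos hs'le hineq'
      -- reflect it
      have htt : t + s' = N * s := by
        have hNs : N * s = q * s + s := by rw [hNq]; ring
        omega
      exact reflect N s' s t hs'pos hs htt hbrick'

/-- Existence of bricks, general. -/
theorem brick (N s t : ℕ) (hN : 3 ≤ N) (hs : 0 < s) (ht : 0 < t)
    (hineq : s*s + t*t ≤ N*(s*t)) :
    ∃ M : Fin N → Matrix (Fin s) (Fin t) ℂ,
      ∀ (C : Matrix (Fin s) (Fin s) ℂ) (D : Matrix (Fin t) (Fin t) ℂ),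
        (∀ v, C * M v = M v * D) → ∃ l : ℂ, C = l • 1 ∧ D = l • 1 := by
  rcases le_or_gt s t with hle | hlt
  · exact brick_le t s N hN hs hle hineq
  · obtain ⟨ψ, hψ⟩ := brick_le s t N hN ht (le_of_lt hlt) (by
      calc t*t + s*s = s*s + t*t := by ring
        _ ≤ N*(s*t) := hineq
        _ = N*(t*s) := by ring)
    refine ⟨fun v => (ψ v).transpose, ?_⟩
    intro C D hCD
    have h2 : ∀ v, D.transpose * ψ v = ψ v * C.transpose := by
      intro v
      have := congrArg Matrix.transpose (hCD v)
      rw [Matrix.transpose_mul, Matrix.transpose_mul, Matrix.transpose_transpose] at this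
      exact this.symm
    obtain ⟨l, hD, hC⟩ := hψ D.transpose C.transpose h2
    refine ⟨l, ?_, ?_⟩
    · have := congrArg Matrix.transpose hC
      rwa [Matrix.transpose_transpose, Matrix.transpose_smul, Matrix.transpose_one] at this
    · have := congrArg Matrix.transpose hD
      rwa [Matrix.transpose_transpose, Matrix.transpose_smul, Matrix.transpose_one] at this

end brick


section final

variable {N s t : ℕ}

/-- Flatten a pair of matrices into a vector. -/
def vecCD (C : Matrix (Fin s) (Fin s) ℂ) (D : Matrix (Fin t) (Fin t) ℂ) :
    (Fin s × Fin s) ⊕ (Fin t × Fin t) → ℂ :=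
  Sum.elim (fun p => C p.1 p.2) (fun p => D p.1 p.2)

/-- The matrix of the linear map `(C,D) ↦ (C·M_v - M_v·D)_v`. -/
def LM (M : Fin N → Matrix (Fin s) (Fin t) ℂ) :
    Matrix (Fin N × Fin s × Fin t) ((Fin s × Fin s) ⊕ (Fin t × Fin t)) ℂ :=
  fun r c => Sum.elim (fun p => if r.2.1 = p.1 then M r.1 p.2 r.2.2 else 0)
    (fun p => if r.2.2 = p.2 then -(M r.1 r.2.1 p.1) else 0) c

/-- Its polynomial version with generic entries. -/
noncomputable def Lpoly (N s t : ℕ) :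
    Matrix (Fin N × Fin s × Fin t) ((Fin s × Fin s) ⊕ (Fin t × Fin t))
      (MvPolynomial (Fin N × Fin s × Fin t) ℂ) :=
  fun r c => Sum.elim (fun p => if r.2.1 = p.1 then MvPolynomial.X (r.1, p.2, r.2.2) else 0)
    (fun p => if r.2.2 = p.2 then -(MvPolynomial.X (r.1, r.2.1, p.1)) else 0) c

lemma eval_Lpoly (M : Fin N → Matrix (Fin s) (Fin t) ℂ) (r) (c) :
    MvPolynomial.eval (fun x : Fin N × Fin s × Fin t => M x.1 x.2.1 x.2.2)
      (Lpoly N s t r c) = LM M r c := by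
  cases c with
  | inl p =>
    simp only [Lpoly, LM, Sum.elim_inl, apply_ite (MvPolynomial.eval _), map_zero,
      MvPolynomial.eval_X]
  | inr p =>
    simp only [Lpoly, LM, Sum.elim_inr, apply_ite (MvPolynomial.eval _), map_zero,
      map_neg, MvPolynomial.eval_X]

lemma LM_mulVec (M : Fin N → Matrix (Fin s) (Fin t) ℂ) (C : Matrix (Fin s) (Fin s) ℂ)
    (D : Matrix (Fin t) (Fin t) ℂ) (r : Fin N × Fin s × Fin t) :
    (LM M).mulVec (vecCD C D) r = (C * M r.1 - M r.1 * D) r.2.1 r.2.2 := by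
  show ∑ c, LM M r c * vecCD C D c = _
  rw [Fintype.sum_sum_type]
  have h1 : ∑ p : Fin s × Fin s, LM M r (Sum.inl p) * vecCD C D (Sum.inl p)
      = (C * M r.1) r.2.1 r.2.2 := by
    rw [Fintype.sum_prod_type, Fintype.sum_eq_single r.2.1]
    · rw [Matrix.mul_apply]
      apply Finset.sum_congr rfl
      intro b _
      show (if r.2.1 = r.2.1 then M r.1 b r.2.2 else 0) * C r.2.1 b = _
      rw [if_pos rfl]
      ring
    · intro a ha
      apply Finset.sum_eq_zero
      intro b _
      show (if r.2.1 = a then M r.1 b r.2.2 else 0) * C a b = 0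
      rw [if_neg (fun hh => ha hh.symm), zero_mul]
  have h2 : ∑ p : Fin t × Fin t, LM M r (Sum.inr p) * vecCD C D (Sum.inr p)
      = -((M r.1 * D) r.2.1 r.2.2) := by
    rw [Fintype.sum_prod_type]
    have hinner : ∀ c' : Fin t, (∑ d : Fin t,
        LM M r (Sum.inr (c', d)) * vecCD C D (Sum.inr (c', d)))
        = -(M r.1 r.2.1 c' * D c' r.2.2) := by
      intro c'
      rw [Fintype.sum_eq_single r.2.2]
      · show (if r.2.2 = r.2.2 then -(M r.1 r.2.1 c') else 0) * D c' r.2.2 = _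
        rw [if_pos rfl]
        ring
      · intro d hd
        show (if r.2.2 = d then -(M r.1 r.2.1 c') else 0) * D c' d = 0
        rw [if_neg (fun hh => hd hh.symm), zero_mul]
    rw [Finset.sum_congr rfl (fun c' _ => hinner c'), Matrix.mul_apply]
    rw [← Finset.sum_neg_distrib]
  rw [h1, h2, Matrix.sub_apply]
  ring

/-- The flattened identity pair. -/
def w0 (s t : ℕ) : (Fin s × Fin s) ⊕ (Fin t × Fin t) → ℂ :=
  vecCD (1 : Matrix (Fin s) (Fin s) ℂ) (1 : Matrix (Fin t) (Fin t) ℂ)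

lemma w0_inl (p : Fin s × Fin s) : w0 s t (Sum.inl p) = if p.1 = p.2 then 1 else 0 := by
  rw [w0, vecCD, Sum.elim_inl, Matrix.one_apply]

lemma w0_inr (p : Fin t × Fin t) : w0 s t (Sum.inr p) = if p.1 = p.2 then 1 else 0 := by
  rw [w0, vecCD, Sum.elim_inr, Matrix.one_apply]

lemma w0_ne_zero (hs : 0 < s) : w0 s t ≠ 0 := by
  intro h0
  have := congrFun h0 (Sum.inl (⟨0, hs⟩, ⟨0, hs⟩))
  rw [w0_inl, if_pos rfl] at this
  exact one_ne_zero this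

lemma sum_w0_w0 : ∑ c, w0 s t c * w0 s t c = (s : ℂ) + (t : ℂ) := by
  rw [Fintype.sum_sum_type]
  have h1 : ∑ p : Fin s × Fin s, w0 s t (Sum.inl p) * w0 s t (Sum.inl p) = (s:ℂ) := by
    rw [Fintype.sum_prod_type]
    have hin : ∀ a : Fin s,
        (∑ b : Fin s, w0 s t (Sum.inl (a,b)) * w0 s t (Sum.inl (a,b))) = 1 := by
      intro a
      rw [Fintype.sum_eq_single a]
      · rw [w0_inl, if_pos rfl, mul_one]
      · intro b hb
        rw [w0_inl, if_neg (fun hh => hb hh.symm), zero_mul]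
    rw [Finset.sum_congr rfl (fun a _ => hin a), Finset.sum_const, Finset.card_univ,
      Fintype.card_fin, nsmul_eq_mul, mul_one]
  have h2 : ∑ p : Fin t × Fin t, w0 s t (Sum.inr p) * w0 s t (Sum.inr p) = (t:ℂ) := by
    rw [Fintype.sum_prod_type]
    have hin : ∀ a : Fin t,
        (∑ b : Fin t, w0 s t (Sum.inr (a,b)) * w0 s t (Sum.inr (a,b))) = 1 := by
      intro a
      rw [Fintype.sum_eq_single a]
      · rw [w0_inr, if_pos rfl, mul_one]
      · intro b hb
        rw [w0_inr, if_neg (fun hh => hb hh.symm), zero_mul]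
    rw [Finset.sum_congr rfl (fun a _ => hin a), Finset.sum_const, Finset.card_univ,
      Fintype.card_fin, nsmul_eq_mul, mul_one]
  rw [h1, h2]

end final

end St18


/-- Suppose `s² - N·s·t + t² ≤ 0` with `N ≥ 3`. If `(A,B) ∈ GL(s,ℂ)×GL(t,ℂ)`
is not of the form `(λI, λI)`, then the set of matrices `M` of linear forms in
`N` variables satisfying `C⁻¹·M·D = M` (i.e. `C·M(v) = M(v)·D` for all `v`) for
some pair `(C,D)` conjugate to `(A,B)` is contained in a proper Zariski closed
subset of `ℂ^s ⊗ ℂ^t ⊗ ℂ^N`, i.e. in the zero locus of a nonzero polynomial in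
the coordinates. -/
theorem stmt18 (N s t : ℕ) (hN : 3 ≤ N)
    (A : Matrix (Fin s) (Fin s) ℂ) (B : Matrix (Fin t) (Fin t) ℂ)
    (hA : IsUnit A) (hB : IsUnit B)
    (hAB : ¬ ∃ c : ℂ, A = c • (1 : Matrix (Fin s) (Fin s) ℂ) ∧
      B = c • (1 : Matrix (Fin t) (Fin t) ℂ))
    (hst : (s : ℤ)^2 - N * s * t + (t : ℤ)^2 ≤ 0) :
    ∃ P : MvPolynomial (Fin N × Fin s × Fin t) ℂ, P ≠ 0 ∧
      ∀ M : Fin N → Matrix (Fin s) (Fin t) ℂ,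
        (∃ (Pm : Matrix (Fin s) (Fin s) ℂ) (Qm : Matrix (Fin t) (Fin t) ℂ),
          IsUnit Pm ∧ IsUnit Qm ∧
          ∀ v : Fin N, (Pm⁻¹ * A * Pm) * M v = M v * (Qm⁻¹ * B * Qm)) →
        MvPolynomial.eval (fun x => M x.1 x.2.1 x.2.2) P = 0 := by
  classical
  have hineqN : s*s + t*t ≤ N*(s*t) := by
    have h1 : (s:ℤ)*s + (t:ℤ)*t ≤ (N:ℤ)*((s:ℤ)*(t:ℤ)) := by nlinarith [hst]
    exact_mod_cast h1
  by_cases hst0 : s = 0 ∨ t = 0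
  · exfalso
    have hboth : s = 0 ∧ t = 0 := by
      rcases hst0 with h | h
      · subst h
        simp only [Nat.zero_mul, Nat.mul_zero, Nat.zero_add] at hineqN
        exact ⟨rfl, mul_self_eq_zero.mp (Nat.le_zero.mp hineqN)⟩
      · subst h
        simp only [Nat.zero_mul, Nat.mul_zero, Nat.add_zero] at hineqN
        exact ⟨mul_self_eq_zero.mp (Nat.le_zero.mp hineqN), rfl⟩
    obtain ⟨h1, h2⟩ := hboth
    subst h1; subst h2
    exact hAB ⟨0, funext fun i => i.elim0, funext fun i => i.elim0⟩
  push_neg at hst0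
  have hs : 0 < s := Nat.pos_of_ne_zero hst0.1
  have ht : 0 < t := Nat.pos_of_ne_zero hst0.2
  obtain ⟨M₀, hM₀⟩ := St18.brick N s t hN hs ht hineqN
  -- the identity pair is always in the kernel
  have hkerw0 : ∀ M : Fin N → Matrix (Fin s) (Fin t) ℂ,
      (St18.LM M).mulVec (St18.w0 s t) = 0 := by
    intro M
    funext r
    rw [St18.w0, St18.LM_mulVec, Matrix.one_mul, Matrix.mul_one, sub_self,
      Matrix.zero_apply, Pi.zero_apply]
  -- at M₀, the kernel is exactly the span of w0
  have hker0 : ∀ x, (St18.LM M₀).mulVec x = 0 → ∃ l : ℂ, x = l • St18.w0 s t := by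
    intro x hx
    obtain ⟨C, D, rfl⟩ : ∃ C D, x = St18.vecCD C D :=
      ⟨fun a b => x (Sum.inl (a,b)), fun a b => x (Sum.inr (a,b)), by
        funext c
        rcases c with p | p <;> rfl⟩
    have hsym : ∀ v, C * M₀ v = M₀ v * D := by
      intro v
      funext i j
      have h1 := congrFun hx (v, i, j)
      rw [St18.LM_mulVec, Pi.zero_apply, Matrix.sub_apply] at h1
      exact sub_eq_zero.mp h1
    obtain ⟨l, hC, hD⟩ := hM₀ C D hsym
    refine ⟨l, ?_⟩
    funext c
    rcases c with p | p
    · show C p.1 p.2 = (l • St18.w0 s t) (Sum.inl p)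
      rw [hC]
      simp only [Matrix.smul_apply, Pi.smul_apply, Matrix.one_apply, St18.w0_inl, smul_eq_mul]
    · show D p.1 p.2 = (l • St18.w0 s t) (Sum.inr p)
      rw [hD]
      simp only [Matrix.smul_apply, Pi.smul_apply, Matrix.one_apply, St18.w0_inr, smul_eq_mul]
  have hcardκ : Fintype.card ((Fin s × Fin s) ⊕ (Fin t × Fin t)) = s*s + t*t := by simp
  -- row space dimension
  have hkerspan : LinearMap.ker (St18.LM M₀).mulVecLin = Submodule.span ℂ {St18.w0 s t} := by
    apply le_antisymm
    · intro x hx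
      rw [LinearMap.mem_ker, Matrix.mulVecLin_apply] at hx
      obtain ⟨l, hl⟩ := hker0 x hx
      rw [Submodule.mem_span_singleton]
      exact ⟨l, hl.symm⟩
    · rw [Submodule.span_singleton_le_iff_mem, LinearMap.mem_ker, Matrix.mulVecLin_apply]
      exact hkerw0 M₀
  have hrank : (St18.LM M₀).rank = s*s + t*t - 1 := by
    have h1 := LinearMap.finrank_range_add_finrank_ker (St18.LM M₀).mulVecLin
    rw [hkerspan, finrank_span_singleton (St18.w0_ne_zero hs),
      Module.finrank_fintype_fun_eq_card, hcardκ] at h1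
    have h2 : (St18.LM M₀).rank
        = Module.finrank ℂ (LinearMap.range (St18.LM M₀).mulVecLin) := rfl
    omega
  have hfinrank_rows : Module.finrank ℂ (Submodule.span ℂ (Set.range (St18.LM M₀)))
      = s*s + t*t - 1 := by
    have h0 : Submodule.span ℂ (Set.range (St18.LM M₀))
        = LinearMap.range ((St18.LM M₀).transpose).mulVecLin := by
      exact (Matrix.range_mulVecLin _).symm
    rw [h0]
    have h2 : ((St18.LM M₀).transpose).rank = (St18.LM M₀).rank := Matrix.rank_transpose _
    exact h2.trans hrank
  -- extract an independent spanning subset of the rows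
  obtain ⟨bset, hsub, hspan, hind⟩ := exists_linearIndependent ℂ (Set.range (St18.LM M₀))
  have hfinb : bset.Finite := (Set.finite_range _).subset hsub
  haveI : Fintype bset := hfinb.fintype
  have hcardb : Fintype.card bset = s*s + t*t - 1 := by
    have h1 := finrank_span_set_eq_card hind
    rw [hspan, hfinrank_rows] at h1
    rw [← Set.toFinset_card]
    exact h1.symm
  obtain ⟨k0, hk0⟩ : ∃ k0 : (Fin s × Fin s) ⊕ (Fin t × Fin t),
      k0 = Sum.inl (⟨0, hs⟩, ⟨0, hs⟩) := ⟨_, rfl⟩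
  have hcardsub : Fintype.card {k : (Fin s × Fin s) ⊕ (Fin t × Fin t) // ¬ k = k0}
      = s*s + t*t - 1 := by
    have h1 := Fintype.card_subtype_compl (fun k : (Fin s × Fin s) ⊕ (Fin t × Fin t) => k = k0)
    rw [Fintype.card_subtype_eq, hcardκ] at h1
    exact h1
  obtain ⟨e⟩ : Nonempty ({k : (Fin s × Fin s) ⊕ (Fin t × Fin t) // ¬ k = k0} ≃ bset) :=
    ⟨Fintype.equivOfCardEq (hcardsub.trans hcardb.symm)⟩
  have hgex : ∀ k : {k : (Fin s × Fin s) ⊕ (Fin t × Fin t) // ¬ k = k0},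
      ∃ r, St18.LM M₀ r = ((e k : bset) : _) := fun k => hsub (e k).2
  obtain ⟨gfun, hgfun⟩ : ∃ g : {k : (Fin s × Fin s) ⊕ (Fin t × Fin t) // ¬ k = k0} →
      Fin N × Fin s × Fin t, ∀ k, St18.LM M₀ (g k) = ((e k : bset) : _) :=
    ⟨fun k => Classical.choose (hgex k), fun k => Classical.choose_spec (hgex k)⟩
  -- the polynomial
  obtain ⟨Qp, hQp⟩ : ∃ Q : Matrix ((Fin s × Fin s) ⊕ (Fin t × Fin t))
      ((Fin s × Fin s) ⊕ (Fin t × Fin t)) (MvPolynomial (Fin N × Fin s × Fin t) ℂ),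
      Q = fun k c => if h : k = k0 then MvPolynomial.C (St18.w0 s t c)
        else St18.Lpoly N s t (gfun ⟨k, h⟩) c := ⟨_, rfl⟩
  refine ⟨Qp.det, ?_, ?_⟩
  · -- nonvanishing
    intro hP0
    have hev := congrArg (MvPolynomial.eval (fun x : Fin N × Fin s × Fin t =>
      M₀ x.1 x.2.1 x.2.2)) hP0
    rw [map_zero, RingHom.map_det] at hev
    obtain ⟨QM, hQM⟩ : ∃ Q : Matrix ((Fin s × Fin s) ⊕ (Fin t × Fin t))
        ((Fin s × Fin s) ⊕ (Fin t × Fin t)) ℂ,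
        Q = fun k c => if h : k = k0 then St18.w0 s t c
          else St18.LM M₀ (gfun ⟨k, h⟩) c := ⟨_, rfl⟩
    have hmap : (MvPolynomial.eval (fun x : Fin N × Fin s × Fin t =>
        M₀ x.1 x.2.1 x.2.2)).mapMatrix Qp = QM := by
      funext k c
      rw [RingHom.mapMatrix_apply, Matrix.map_apply, hQp, hQM]
      simp only []
      by_cases h : k = k0
      · rw [dif_pos h, dif_pos h, MvPolynomial.eval_C]
      · rw [dif_neg h, dif_neg h, St18.eval_Lpoly]
    rw [hmap] at hev
    -- rows of QM are linearly independent
    have hw0notspan : St18.w0 s t ∉ Submodule.span ℂ bset := by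
      rw [hspan]
      intro hmem
      obtain ⟨φw, hφw2⟩ : ∃ φ : (((Fin s × Fin s) ⊕ (Fin t × Fin t)) → ℂ) →ₗ[ℂ] ℂ,
          φ = ∑ c, (St18.w0 s t c) •
            (LinearMap.proj c : (((Fin s × Fin s) ⊕ (Fin t × Fin t)) → ℂ) →ₗ[ℂ] ℂ) := ⟨_, rfl⟩
      have hφw : ∀ y, φw y = ∑ c, y c * St18.w0 s t c := by
        intro y
        rw [hφw2, LinearMap.sum_apply]
        apply Finset.sum_congr rfl
        intro c _
        rw [LinearMap.smul_apply, LinearMap.proj_apply, smul_eq_mul, mul_comm]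
      have hle : Submodule.span ℂ (Set.range (St18.LM M₀)) ≤ LinearMap.ker φw := by
        rw [Submodule.span_le]
        rintro y ⟨r, rfl⟩
        rw [SetLike.mem_coe, LinearMap.mem_ker, hφw]
        exact congrFun (hkerw0 M₀) r
      have hmem2 := hle hmem
      rw [LinearMap.mem_ker, hφw, St18.sum_w0_w0] at hmem2
      have : ((s + t : ℕ) : ℂ) = 0 := by push_cast; linear_combination hmem2
      rw [Nat.cast_eq_zero] at this
      omega
    have hw0notb : St18.w0 s t ∉ bset := fun hmem => hw0notspan (Submodule.subset_span hmem)
    have hins : LinearIndependent ℂ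
        (fun (x : ↥(insert (St18.w0 s t) bset)) =>
          (x : ((Fin s × Fin s) ⊕ (Fin t × Fin t)) → ℂ)) :=
      (linearIndepOn_id_insert hw0notb).mpr ⟨hind, hw0notspan⟩
    obtain ⟨F, hF⟩ : ∃ F : ((Fin s × Fin s) ⊕ (Fin t × Fin t)) →
        ↥(insert (St18.w0 s t) bset),
        F = fun k => if h : k = k0 then ⟨St18.w0 s t, Set.mem_insert _ _⟩
          else ⟨((e ⟨k, h⟩ : bset) : _), Set.mem_insert_of_mem _ (e ⟨k, h⟩).2⟩ := ⟨_, rfl⟩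
    have hFval : ∀ k, ((F k : _) : ((Fin s × Fin s) ⊕ (Fin t × Fin t)) → ℂ) = QM k := by
      intro k
      rw [hF, hQM]
      simp only []
      by_cases h : k = k0
      · rw [dif_pos h]
        funext c
        rw [dif_pos h]
      · rw [dif_neg h]
        funext c
        rw [dif_neg h]
        exact (congrFun (hgfun ⟨k, h⟩) c).symm
    have hFinj : Function.Injective F := by
      intro k1 k2 hFeq
      by_cases h1 : k1 = k0 <;> by_cases h2 : k2 = k0
      · rw [h1, h2]
      · exfalso
        apply hw0notb
        have hv := congrArg Subtype.val hFeq
        rw [hF] at hv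
        simp only [dif_pos h1, dif_neg h2] at hv
        rw [hv]
        exact (e ⟨k2, h2⟩).2
      · exfalso
        apply hw0notb
        have hv := congrArg Subtype.val hFeq
        rw [hF] at hv
        simp only [dif_pos h2, dif_neg h1] at hv
        rw [← hv]
        exact (e ⟨k1, h1⟩).2
      · have hv := congrArg Subtype.val hFeq
        rw [hF] at hv
        simp only [dif_neg h1, dif_neg h2] at hv
        have := e.injective (Subtype.coe_injective hv)
        exact congrArg Subtype.val this
    have hindQ : LinearIndependent ℂ (fun k => QM k) := by
      have hcomp : (fun k => QM k)
          = (fun (x : ↥(insert (St18.w0 s t) bset)) =>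
              (x : ((Fin s × Fin s) ⊕ (Fin t × Fin t)) → ℂ)) ∘ F := by
        funext k
        exact (hFval k).symm
      rw [hcomp]
      exact hins.comp F hFinj
    -- contradiction with det = 0
    obtain ⟨v, hvne, hv0⟩ := (Matrix.exists_mulVec_eq_zero_iff
      (M := QM.transpose)).mpr (by rw [Matrix.det_transpose]; exact hev)
    rw [Matrix.mulVec_transpose] at hv0
    have hsum : ∑ k, v k • QM k = 0 := by
      funext c
      rw [Finset.sum_apply, Pi.zero_apply]
      have h1 := congrFun hv0 c
      rw [Pi.zero_apply] at h1
      calc ∑ k, (v k • QM k) c = ∑ k, v k * QM k c := by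
            apply Finset.sum_congr rfl
            intro k _
            rw [Pi.smul_apply, smul_eq_mul]
        _ = 0 := h1
    exact hvne (funext fun k => Fintype.linearIndependent_iff.mp hindQ v hsum k)
  · -- vanishing on the symmetric locus
    rintro M ⟨Pm, Qm, hPu, hQu, hsym⟩
    obtain ⟨A', hA'⟩ : ∃ A', A' = Pm⁻¹ * A * Pm := ⟨_, rfl⟩
    obtain ⟨B', hB'⟩ : ∃ B', B' = Qm⁻¹ * B * Qm := ⟨_, rfl⟩
    have hw1ker : (St18.LM M).mulVec (St18.vecCD A' B') = 0 := by
      funext r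
      rw [St18.LM_mulVec, Pi.zero_apply, Matrix.sub_apply]
      have := hsym r.1
      rw [← hA', ← hB'] at this
      rw [this]
      ring
    obtain ⟨α, hα⟩ : ∃ α : ℂ, α = (s:ℂ) + (t:ℂ) := ⟨_, rfl⟩
    have hαne : α ≠ 0 := by
      rw [hα]
      have : ((s + t : ℕ) : ℂ) = (s:ℂ) + (t:ℂ) := by push_cast; ring
      rw [← this, Nat.cast_ne_zero]
      omega
    obtain ⟨β, hβ⟩ : ∃ β : ℂ, β = ∑ c, St18.w0 s t c * St18.vecCD A' B' c := ⟨_, rfl⟩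
    obtain ⟨x, hx⟩ : ∃ x, x = α • St18.vecCD A' B' - β • St18.w0 s t := ⟨_, rfl⟩
    have hxker : (St18.LM M).mulVec x = 0 := by
      rw [hx]
      have h1 : (St18.LM M).mulVec (α • St18.vecCD A' B' - β • St18.w0 s t)
          = α • (St18.LM M).mulVec (St18.vecCD A' B') - β • (St18.LM M).mulVec (St18.w0 s t) := by
        rw [← Matrix.mulVecLin_apply, ← Matrix.mulVecLin_apply, ← Matrix.mulVecLin_apply,
          map_sub, map_smul, map_smul]
      rw [h1, hw1ker, hkerw0 M, smul_zero, smul_zero, sub_zero]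
    have hxpair : ∑ c, St18.w0 s t c * x c = 0 := by
      rw [hx]
      have : ∀ c, St18.w0 s t c * (α • St18.vecCD A' B' - β • St18.w0 s t) c
          = α * (St18.w0 s t c * St18.vecCD A' B' c) - β * (St18.w0 s t c * St18.w0 s t c) := by
        intro c
        rw [Pi.sub_apply, Pi.smul_apply, Pi.smul_apply, smul_eq_mul, smul_eq_mul]
        ring
      rw [Finset.sum_congr rfl (fun c _ => this c), Finset.sum_sub_distrib,
        ← Finset.mul_sum, ← Finset.mul_sum, ← hβ, St18.sum_w0_w0, ← hα]
      ring
    have hxne : x ≠ 0 := by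
      intro hx0
      have hw1w0 : St18.vecCD A' B' = (α⁻¹ * β) • St18.w0 s t := by
        have h1 : α • St18.vecCD A' B' = β • St18.w0 s t := by
          have := congrArg (fun y => y + β • St18.w0 s t) (hx ▸ hx0 : α • St18.vecCD A' B' - β • St18.w0 s t = 0)
          simpa [sub_add_cancel] using this
        funext c
        have h2 := congrFun h1 c
        rw [Pi.smul_apply, Pi.smul_apply, smul_eq_mul, smul_eq_mul] at h2
        rw [Pi.smul_apply, smul_eq_mul]
        have h3 : St18.vecCD A' B' c = α⁻¹ * (α * St18.vecCD A' B' c) := by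
          field_simp
        rw [h3, h2]
        ring
      apply hAB
      refine ⟨α⁻¹ * β, ?_, ?_⟩
      · have hA'eq : A' = (α⁻¹ * β) • 1 := by
          funext a b
          have := congrFun hw1w0 (Sum.inl (a, b))
          rw [Pi.smul_apply, St18.w0_inl, smul_eq_mul] at this
          show A' a b = ((α⁻¹ * β) • (1 : Matrix (Fin s) (Fin s) ℂ)) a b
          rw [Matrix.smul_apply, Matrix.one_apply, smul_eq_mul]
          exact this
        have hPd : IsUnit Pm.det := (Matrix.isUnit_iff_isUnit_det Pm).mp hPu
        calc A = (Pm * Pm⁻¹) * A * (Pm * Pm⁻¹) := by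
              rw [Matrix.mul_nonsing_inv Pm hPd, Matrix.one_mul, Matrix.mul_one]
          _ = Pm * (Pm⁻¹ * A * Pm) * Pm⁻¹ := by
              simp only [Matrix.mul_assoc]
          _ = Pm * A' * Pm⁻¹ := by rw [← hA']
          _ = (α⁻¹ * β) • 1 := by
              rw [hA'eq, Matrix.mul_smul, Matrix.smul_mul, Matrix.mul_one,
                Matrix.mul_nonsing_inv Pm hPd]
      · have hB'eq : B' = (α⁻¹ * β) • 1 := by
          funext a b
          have := congrFun hw1w0 (Sum.inr (a, b))
          rw [Pi.smul_apply, St18.w0_inr, smul_eq_mul] at this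
          show B' a b = ((α⁻¹ * β) • (1 : Matrix (Fin t) (Fin t) ℂ)) a b
          rw [Matrix.smul_apply, Matrix.one_apply, smul_eq_mul]
          exact this
        have hQd : IsUnit Qm.det := (Matrix.isUnit_iff_isUnit_det Qm).mp hQu
        calc B = (Qm * Qm⁻¹) * B * (Qm * Qm⁻¹) := by
              rw [Matrix.mul_nonsing_inv Qm hQd, Matrix.one_mul, Matrix.mul_one]
          _ = Qm * (Qm⁻¹ * B * Qm) * Qm⁻¹ := by
              simp only [Matrix.mul_assoc]
          _ = Qm * B' * Qm⁻¹ := by rw [← hB']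
          _ = (α⁻¹ * β) • 1 := by
              rw [hB'eq, Matrix.mul_smul, Matrix.smul_mul, Matrix.mul_one,
                Matrix.mul_nonsing_inv Qm hQd]
    -- evaluate the determinant at M
    obtain ⟨QM, hQM⟩ : ∃ Q : Matrix ((Fin s × Fin s) ⊕ (Fin t × Fin t))
        ((Fin s × Fin s) ⊕ (Fin t × Fin t)) ℂ,
        Q = fun k c => if h : k = k0 then St18.w0 s t c
          else St18.LM M (gfun ⟨k, h⟩) c := ⟨_, rfl⟩
    have hmap : (MvPolynomial.eval (fun x : Fin N × Fin s × Fin t =>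
        M x.1 x.2.1 x.2.2)).mapMatrix Qp = QM := by
      funext k c
      rw [RingHom.mapMatrix_apply, Matrix.map_apply, hQp, hQM]
      simp only []
      by_cases h : k = k0
      · rw [dif_pos h, dif_pos h, MvPolynomial.eval_C]
      · rw [dif_neg h, dif_neg h, St18.eval_Lpoly]
    rw [RingHom.map_det, hmap]
    rw [← Matrix.exists_mulVec_eq_zero_iff]
    refine ⟨x, hxne, ?_⟩
    funext k
    show ∑ c, QM k c * x c = 0
    rw [hQM]
    simp only []
    by_cases h : k = k0
    · calc ∑ c, (if h : k = k0 then St18.w0 s t c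
            else St18.LM M (gfun ⟨k, h⟩) c) * x c
          = ∑ c, St18.w0 s t c * x c := by
            apply Finset.sum_congr rfl
            intro c _
            rw [dif_pos h]
        _ = 0 := hxpair
    · calc ∑ c, (if h : k = k0 then St18.w0 s t c
            else St18.LM M (gfun ⟨k, h⟩) c) * x c
          = ∑ c, St18.LM M (gfun ⟨k, h⟩) c * x c := by
            apply Finset.sum_congr rfl
            intro c _
            rw [dif_neg h]
        _ = 0 := congrFun hxker (gfun ⟨k, h⟩)
end
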